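/- arXiv:1504.00218 — 9 statements merged into one kernel-verified Lean document; each statement's English description precedes it below -/
import Mathlib

section
/- Let (X,T) be a dynamical system, let U, V ⊆ X be nonempty open sets, and let x be a transitive point for (X,T). Then N(U,V) = {n − m : n ∈ N(x,V), m ∈ N(x,U)} ∩ ℕ; that is, the hitting time set N(U,V) equals the positive part of the difference set N(x,V) − N(x,U). -/
/-- The hitting time set `N(A,B) = {n ∈ ℕ : T^n(A) ∩ B ≠ ∅}` (as a set of
positive integers, viewed inside `ℤ`). -/
def hitting {X : Type*} [TopologicalSpace X] (T : X ≃ₜ X) (A B : Set X) : Set ℤ :=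
  {n : ℤ | 0 < n ∧ ∃ x ∈ A, (⇑T)^[n.toNat] x ∈ B}

/-- `N(x,B) = {n ∈ ℕ : T^n(x) ∈ B}` (as a set of positive integers inside `ℤ`). -/
def hittingPt {X : Type*} [TopologicalSpace X] (T : X ≃ₜ X) (x : X) (B : Set X) : Set ℤ :=
  {n : ℤ | 0 < n ∧ (⇑T)^[n.toNat] x ∈ B}

/-- `x` is a transitive point: `N(x,U) ≠ ∅` for every nonempty open `U`. -/
def IsTransPt {X : Type*} [TopologicalSpace X] (T : X ≃ₜ X) (x : X) : Prop :=
  ∀ U : Set X, IsOpen U → U.Nonempty → (hittingPt T x U).Nonempty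

/-- if `x` is a transitive point of the dynamical system `(X,T)`
(`X` a compact metric space, `T` a homeomorphism) and `U, V` are nonempty open
sets, then `N(U,V) = (N(x,V) − N(x,U)) ∩ ℕ`. -/
theorem hitting_eq_diff_of_transPt {X : Type*} [MetricSpace X] [CompactSpace X]
    (T : X ≃ₜ X) (U V : Set X) (hU : IsOpen U) (hV : IsOpen V)
    (hUne : U.Nonempty) (hVne : V.Nonempty) (x : X) (hx : IsTransPt T x) :
    hitting T U V =
      {d : ℤ | ∃ n ∈ hittingPt T x V, ∃ m ∈ hittingPt T x U, d = n - m} ∩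
        {n : ℤ | 0 < n} := by
  ext d
  simp only [Set.mem_inter_iff, Set.mem_setOf_eq, hitting, hittingPt]
  constructor
  · rintro ⟨hd, y, hyU, hyV⟩
    refine ⟨?_, hd⟩
    set W := U ∩ (⇑T)^[d.toNat] ⁻¹' V with hW
    have hWopen : IsOpen W := hU.inter (hV.preimage (T.continuous.iterate d.toNat))
    have hWne : W.Nonempty := ⟨y, hyU, hyV⟩
    obtain ⟨m, hm, hmW⟩ := hx W hWopen hWne
    refine ⟨m + d, ⟨by linarith, ?_⟩, m, ⟨hm, hmW.1⟩, by ring⟩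
    have h : (m + d).toNat = d.toNat + m.toNat := by omega
    rw [h, Function.iterate_add_apply]
    exact hmW.2
  · rintro ⟨⟨n, ⟨hn, hnV⟩, m, ⟨hm, hmU⟩, hd⟩, hdpos⟩
    refine ⟨hdpos, (⇑T)^[m.toNat] x, hmU, ?_⟩
    rw [← Function.iterate_add_apply]
    have h : d.toNat + m.toNat = n.toNat := by omega
    rw [h]; exact hnV
end

section
/- Let (X,T) be a dynamical system, let x ∈ X be a recurrent point, and let U ⊆ X be an open set with x ∈ U. Then the hitting time set N(x,U) is an IP set. -/
/-- `IP A`: the set of all finite sums of distinct elements of `A ⊆ ℤ`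
(sums over finite subsets `F ⊆ A`, with the empty sum equal to `0`). -/
def IP (A : Set ℤ) : Set ℤ :=
  {t | ∃ F : Finset ℤ, ↑F ⊆ A ∧ t = ∑ x ∈ F, x}

/-- The positive part `S_+ = S ∩ ℕ` of a set of integers. -/
def posPart (S : Set ℤ) : Set ℤ := S ∩ {n : ℤ | 0 < n}

/-- `B` (a set of positive integers) is an IP set: there is an infinite set
`A` of positive integers with `IP(A)_+ ⊆ B`. -/
def IsIPSet (B : Set ℤ) : Prop :=
  ∃ A : Set ℤ, A ⊆ {n : ℤ | 0 < n} ∧ A.Infinite ∧ posPart (IP A) ⊆ B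

/-- `x` is a recurrent point: `x` lies in the closure of `{T^n(x) : n ∈ ℕ}`
(`ℕ = {1,2,3,...}`). -/
def IsRecurrentPt {X : Type*} [TopologicalSpace X] (T : X ≃ₜ X) (x : X) : Prop :=
  x ∈ closure {y : X | ∃ n : ℕ, 0 < n ∧ (⇑T)^[n] x = y}

/-- For a recurrent point, returns to any open neighborhood happen for
arbitrarily large times. -/
lemma recur_large {X : Type*} [MetricSpace X] (T : X ≃ₜ X) (x : X)
    (hx : IsRecurrentPt T x) (W : Set X) (hW : IsOpen W) (hxW : x ∈ W) (N : ℕ) :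
    ∃ n, N < n ∧ (⇑T)^[n] x ∈ W := by
  by_cases hper : ∃ p, 0 < p ∧ (⇑T)^[p] x = x
  · obtain ⟨p, hp, hfix⟩ := hper
    refine ⟨p * (N + 1), ?_, ?_⟩
    · calc N < N + 1 := Nat.lt_succ_self N
        _ ≤ p * (N + 1) := Nat.le_mul_of_pos_left _ hp
    · rw [Function.iterate_mul, Function.iterate_fixed hfix]
      exact hxW
  · push_neg at hper
    set S : Set X := (fun i => (⇑T)^[i] x) '' (Set.Icc 1 N) with hSdef
    have hSfin : S.Finite := (Set.finite_Icc 1 N).image _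
    have hW' : IsOpen (W \ S) := hW.sdiff hSfin.isClosed
    have hxW' : x ∈ W \ S := by
      refine ⟨hxW, ?_⟩
      intro hxS
      simp only [hSdef, Set.mem_image, Set.mem_Icc] at hxS
      obtain ⟨i, ⟨hi1, _⟩, hix⟩ := hxS
      exact hper i hi1 hix
    rw [IsRecurrentPt, mem_closure_iff] at hx
    obtain ⟨y, hyW', n, hn, hny⟩ := hx _ hW' hxW'
    refine ⟨n, ?_, hny ▸ hyW'.1⟩
    by_contra h
    push_neg at h
    exact hyW'.2 (hny ▸ (by
      simp only [hSdef, Set.mem_image, Set.mem_Icc]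
      exact ⟨n, ⟨hn, h⟩, rfl⟩))

/-- Auxiliary recursive construction: a sequence of pairs (return time, open
neighborhood of `x` inside `U`), where each step chooses a later return time
into the current neighborhood and shrinks it. -/
noncomputable def seqAux {X : Type*} [MetricSpace X] (T : X ≃ₜ X) (x : X)
    (hx : IsRecurrentPt T x) (U : Set X) (hU : IsOpen U) (hxU : x ∈ U) :
    ℕ → {p : ℕ × Set X // IsOpen p.2 ∧ x ∈ p.2 ∧ p.2 ⊆ U}
  | 0 => ⟨(0, U), hU, hxU, subset_rfl⟩
  | (k+1) =>
    let s := seqAux T x hx U hU hxU k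
    let m := (recur_large T x hx s.1.2 s.2.1 s.2.2.1 s.1.1).choose
    have hm := (recur_large T x hx s.1.2 s.2.1 s.2.2.1 s.1.1).choose_spec
    ⟨(m, s.1.2 ∩ (⇑T)^[m] ⁻¹' s.1.2),
     s.2.1.inter (s.2.1.preimage (T.continuous.iterate m)),
     ⟨s.2.2.1, hm.2⟩, fun y hy => s.2.2.2 hy.1⟩

/-- if `x` is a recurrent point of the dynamical system `(X,T)`
and `U` is an open set containing `x`, then `N(x,U)` is an IP set. -/
theorem hittingPt_isIPSet_of_recurrent {X : Type*} [MetricSpace X] [CompactSpace X]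
    (T : X ≃ₜ X) (x : X) (hx : IsRecurrentPt T x)
    (U : Set X) (hU : IsOpen U) (hxU : x ∈ U) :
    IsIPSet (hittingPt T x U) := by
  classical
  set s := seqAux T x hx U hU hxU with hs
  set a : ℕ → ℕ := fun k => (s (k + 1)).1.1 with ha
  set W : ℕ → Set X := fun k => (s k).1.2 with hWdef
  -- basic facts
  have hstep : ∀ k, (s k).1.1 < a k ∧ (⇑T)^[a k] x ∈ W k ∧
      W (k + 1) = W k ∩ (⇑T)^[a k] ⁻¹' W k := by
    intro k
    have hm := (recur_large T x hx (s k).1.2 (s k).2.1 (s k).2.2.1 (s k).1.1).choose_spec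
    exact ⟨hm.1, hm.2, rfl⟩
  have hmono : StrictMono a := by
    apply strictMono_nat_of_lt_succ
    intro k
    exact (hstep (k + 1)).1
  have hapos : ∀ k, 0 < a k := by
    intro k
    calc 0 ≤ (s k).1.1 := Nat.zero_le _
      _ < a k := (hstep k).1
  have hWsub : ∀ k, W k ⊆ U := fun k => (s k).2.2.2
  have hWanti : ∀ j k, j ≤ k → W k ⊆ W j := by
    intro j k hjk
    induction k with
    | zero => simp_all
    | succ n ih =>
      rcases Nat.lt_or_ge j (n+1) with h | h
      · exact ((hstep n).2.2 ▸ Set.inter_subset_left).trans (ih (Nat.lt_succ_iff.mp h))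
      · have : j = n + 1 := le_antisymm hjk h
        subst this; exact subset_rfl
  -- main claim: finite sums of the `a i` are return times to every `W k`
  -- below all the indices involved
  have claim : ∀ F : Finset ℕ, F.Nonempty → ∀ k, (∀ i ∈ F, k ≤ i) →
      (⇑T)^[∑ i ∈ F, a i] x ∈ W k := by
    intro F
    induction F using Finset.strongInduction with
    | _ F ih =>
      intro hne k hk
      set i := F.min' hne with hi
      have hiF : i ∈ F := F.min'_mem hne
      have hsum : a i + ∑ j ∈ F.erase i, a j = ∑ j ∈ F, a j :=
        Finset.add_sum_erase F a hiF
      rcases (F.erase i).eq_empty_or_nonempty with he | hne'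
      · have : ∑ j ∈ F, a j = a i := by
          rw [← hsum, he, Finset.sum_empty, Nat.add_zero]
        rw [this]
        exact hWanti k i (hk i hiF) (hstep i).2.1
      · have hsub : F.erase i ⊂ F := Finset.erase_ssubset hiF
        have hge : ∀ j ∈ F.erase i, i + 1 ≤ j := by
          intro j hj
          have hjF := Finset.mem_of_mem_erase hj
          have := F.min'_le j hjF
          have hne2 := Finset.ne_of_mem_erase hj
          omega
        have hIH := ih _ hsub hne' (i + 1) hge
        have : (⇑T)^[∑ j ∈ F.erase i, a j] x ∈ W i ∩ (⇑T)^[a i] ⁻¹' W i :=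
          (hstep i).2.2 ▸ hIH
        have hmem : (⇑T)^[∑ j ∈ F, a j] x ∈ W i := by
          rw [← hsum, Function.iterate_add_apply]
          exact this.2
        exact hWanti k i (hk i hiF) hmem
  have claim' : ∀ G : Finset ℕ, G.Nonempty → (⇑T)^[∑ i ∈ G, a i] x ∈ U :=
    fun G hG => hWsub 0 (claim G hG 0 (fun i _ => Nat.zero_le i))
  -- conclusion
  set g : ℕ → ℤ := fun k => (a k : ℤ) with hg
  have hginj : Function.Injective g :=
    fun j k h => hmono.injective (Int.natCast_inj.mp h)
  refine ⟨Set.range g, ?_, Set.infinite_range_of_injective hginj, ?_⟩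
  · rintro _ ⟨k, rfl⟩
    exact Int.natCast_pos.mpr (hapos k)
  · rintro t ⟨⟨F, hFA, rfl⟩, htpos⟩
    set G := F.preimage g hginj.injOn with hG
    have himg : G.image g = F := by
      rw [hG, Finset.image_preimage]
      exact Finset.filter_true_of_mem (fun z hz => hFA hz)
    have hsum : ∑ z ∈ F, z = (↑(∑ i ∈ G, a i) : ℤ) := by
      rw [← himg, Finset.sum_image (fun p _ q _ h => hginj h)]
      push_cast
      rfl
    have hGne : G.Nonempty := by
      rcases G.eq_empty_or_nonempty with h | h
      · exfalso
        rw [hsum, h, Finset.sum_empty] at htpos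
        exact absurd htpos (by norm_num)
      · exact h
    refine ⟨htpos, ?_⟩
    have : (∑ z ∈ F, z).toNat = ∑ i ∈ G, a i := by
      rw [hsum, Int.toNat_natCast]
    rw [this]
    exact claim' G hGne
end

section
/- Let (X,T) be a dynamical system, let x ∈ X be a recurrent point, and let U ⊆ X be an open set with x ∈ U. Suppose there exists a homeomorphism J : X → X with J ∘ J = id_X, J ∘ T = T^{−1} ∘ J, and J(x) = x. Then the hitting time set N(x,U) is an SIP set. -/
/-- `SIP A = IP A - IP A`. -/
def SIP (A : Set ℤ) : Set ℤ :=
  {d | ∃ s ∈ IP A, ∃ t ∈ IP A, d = s - t}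

/-- `B` (a set of positive integers) is an SIP set: there is an infinite set
`A` of positive integers with `SIP(A)_+ ⊆ B`. -/
def IsSIPSet (B : Set ℤ) : Prop :=
  ∃ A : Set ℤ, A ⊆ {n : ℤ | 0 < n} ∧ A.Infinite ∧ posPart (SIP A) ⊆ B

/-!
Since `J` conjugates `T` to `T⁻¹` and fixes `x`, we have `T⁻ⁿ x = J (Tⁿ x)`, so recurrence of `x`
along the neighbourhood `V ∩ J⁻¹ V` yields arbitrarily large `n` with both `Tⁿ x` and `T⁻ⁿ x`
in `V`. Iterating, one builds open neighbourhoods `U = V₀ ⊇ V₁ ⊇ ⋯` of `x` and times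
`0 < a₀ < a₁ < ⋯` such that `T^{±aₖ}` maps `Vₖ₊₁` into `Vₖ`. Peeling off the smallest index,
`T^{∑ cₖ aₖ} x ∈ U` for every finitely supported `c` with values in `{-1, 0, 1}`, and every
element of `SIP {aₖ}` is such a sum.
-/

open Filter Topology Set Finset

theorem Homeomorph.coe_pow {X : Type*} [TopologicalSpace X] (T : X ≃ₜ X) (n : ℕ) :
    ⇑(T ^ n) = (⇑T)^[n] := by
  induction n with
  | zero => rfl
  | succ n ih => rw [pow_succ, Function.iterate_succ, ← ih]; rfl

section

variable {X : Type*} [TopologicalSpace X] {T : X ≃ₜ X} {x : X}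

theorem mem_hittingPt_iff {B : Set X} {d : ℤ} : d ∈ hittingPt T x B ↔ 0 < d ∧ (T ^ d) x ∈ B := by
  refine and_congr_right fun hd => ?_
  obtain ⟨n, rfl⟩ := Int.eq_ofNat_of_zero_le hd.le
  rw [Int.toNat_natCast, zpow_natCast, Homeomorph.coe_pow]

theorem IsRecurrentPt.frequently_iterate_mem [T1Space X] (hx : IsRecurrentPt T x) {W : Set X}
    (hW : W ∈ 𝓝 x) :
    ∃ᶠ n in atTop, (⇑T)^[n] x ∈ W := by
  rw [frequently_atTop']
  intro m
  induction m generalizing W with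
  | zero =>
    obtain ⟨_, hyW, n, hn, rfl⟩ := mem_closure_iff_nhds.1 hx W hW
    exact ⟨n, hn, hyW⟩
  | succ m ih =>
    -- Either `x` has period `m + 1`, or the point `T^[m + 1] x` can be cut out of `W`.
    by_cases hper : (⇑T)^[m + 1] x = x
    · refine ⟨(m + 1) * 2, by omega, ?_⟩
      rw [Function.iterate_mul, Function.iterate_fixed hper]
      exact mem_of_mem_nhds hW
    · obtain ⟨n, hmn, hnW, hn⟩ := ih (inter_mem hW (compl_singleton_mem_nhds (Ne.symm hper)))
      have hne : n ≠ m + 1 := by rintro rfl; exact hn rfl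
      exact ⟨n, by omega, hnW⟩

theorem IsRecurrentPt.frequently_pow_mem_and_inv_pow_mem [T1Space X] {J : X ≃ₜ X}
    (hx : IsRecurrentPt T x) (hJT : ∀ y, J (T y) = T.symm (J y)) (hJx : J x = x)
    {V : Set X} (hV : V ∈ 𝓝 x) :
    ∃ᶠ n : ℕ in atTop, (T ^ n) x ∈ V ∧ (T ^ n)⁻¹ x ∈ V := by
  have hsemi : SemiconjBy J T T⁻¹ := Homeomorph.ext hJT
  have hconj : ∀ n : ℕ, (T ^ n)⁻¹ x = J ((T ^ n) x) := fun n =>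
    calc (T ^ n)⁻¹ x = (T⁻¹ ^ n * J) x := by rw [inv_pow, Homeomorph.mul_apply, hJx]
      _ = J ((T ^ n) x) := by rw [← (hsemi.pow_right n).eq, Homeomorph.mul_apply]
  have hJV : J ⁻¹' V ∈ 𝓝 x := J.continuous.continuousAt.preimage_mem_nhds (hJx.symm ▸ hV)
  refine (hx.frequently_iterate_mem (inter_mem hV hJV)).mono fun n hn => ?_
  rw [hconj, Homeomorph.coe_pow]
  exact hn

theorem exists_isOpen_mapsTo_zpow
    (h : ∀ V ∈ 𝓝 x, ∃ᶠ n : ℕ in atTop, (T ^ n) x ∈ V ∧ (T ^ n)⁻¹ x ∈ V)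
    {V : Set X} (hV : IsOpen V) (hxV : x ∈ V) (m : ℤ) :
    ∃ n : ℤ, m < n ∧ ∃ W : Set X, IsOpen W ∧ x ∈ W ∧
      ∀ ε ∈ ({-1, 0, 1} : Set ℤ), MapsTo ⇑(T ^ (ε * n)) W V := by
  obtain ⟨n, hmn, hn⟩ := frequently_atTop.1 (h V (hV.mem_nhds hxV)) (m.toNat + 1)
  refine ⟨n, by omega, V ∩ ⇑(T ^ n) ⁻¹' V ∩ ⇑(T ^ n)⁻¹ ⁻¹' V,
    (hV.inter (hV.preimage (T ^ n).continuous)).inter (hV.preimage (T ^ n)⁻¹.continuous),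
    ⟨⟨hxV, hn.1⟩, hn.2⟩, ?_⟩
  rintro ε (rfl | rfl | rfl) y ⟨⟨hyV, hnyV⟩, hnyV'⟩
  · rwa [neg_one_mul, zpow_neg, zpow_natCast]
  · rwa [zero_mul, zpow_zero]
  · rwa [one_mul, zpow_natCast]

theorem exists_seq_isOpen_mapsTo_zpow
    (h : ∀ V ∈ 𝓝 x, ∃ᶠ n : ℕ in atTop, (T ^ n) x ∈ V ∧ (T ^ n)⁻¹ x ∈ V)
    {U : Set X} (hU : IsOpen U) (hxU : x ∈ U) :
    ∃ (a : ℕ → ℤ) (V : ℕ → Set X), StrictMono a ∧ 0 < a 0 ∧ V 0 = U ∧ (∀ k, x ∈ V k) ∧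
      ∀ k, ∀ ε ∈ ({-1, 0, 1} : Set ℤ), MapsTo ⇑(T ^ (ε * a k)) (V (k + 1)) (V k) := by
  have step : ∀ p : ℤ × {V : Set X // IsOpen V ∧ x ∈ V},
      ∃ q : ℤ × {V : Set X // IsOpen V ∧ x ∈ V}, p.1 < q.1 ∧
        ∀ ε ∈ ({-1, 0, 1} : Set ℤ), MapsTo ⇑(T ^ (ε * q.1)) q.2 p.2 := by
    rintro ⟨m, V, hV, hxV⟩
    obtain ⟨n, hmn, W, hW, hxW, hWV⟩ := exists_isOpen_mapsTo_zpow h hV hxV m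
    exact ⟨(n, ⟨W, hW, hxW⟩), hmn, hWV⟩
  choose next hnext using step
  set p := fun k => next^[k] (0, ⟨U, hU, hxU⟩)
  have hp : ∀ k, p (k + 1) = next (p k) := fun k => Function.iterate_succ_apply' ..
  refine ⟨fun k => (p (k + 1)).1, fun k => (p k).2, strictMono_nat_of_lt_succ fun k => ?_, ?_,
    rfl, fun k => (p k).2.2.2, fun k => ?_⟩
  · show (p (k + 1)).1 < (p (k + 1 + 1)).1
    rw [hp (k + 1)]; exact (hnext _).1
  · show (p 0).1 < (p (0 + 1)).1
    rw [hp 0]; exact (hnext _).1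
  · show ∀ ε ∈ ({-1, 0, 1} : Set ℤ), MapsTo ⇑(T ^ (ε * (p (k + 1)).1)) (p (k + 1)).2 (p k).2
    rw [hp k]; exact (hnext _).2

theorem zpow_sum_mul_mem {a c : ℕ → ℤ} {V : ℕ → Set X} (hxV : ∀ k, x ∈ V k)
    (hV : ∀ k, ∀ ε ∈ ({-1, 0, 1} : Set ℤ), MapsTo ⇑(T ^ (ε * a k)) (V (k + 1)) (V k))
    (hc : ∀ l, c l ∈ ({-1, 0, 1} : Set ℤ)) (j n : ℕ) :
    (T ^ ∑ l ∈ Ico j (j + n), c l * a l) x ∈ V j := by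
  induction n generalizing j with
  | zero => simpa using hxV j
  | succ n ih =>
    rw [show j + (n + 1) = j + 1 + n by omega, sum_eq_sum_Ico_succ_bot (by omega), zpow_add,
      Homeomorph.mul_apply]
    exact hV j (c j) (hc j) (ih (j + 1))

theorem exists_sum_mul_eq_of_mem_SIP {a : ℕ → ℤ} (ha : Function.Injective a) {d : ℤ}
    (hd : d ∈ SIP (range a)) :
    ∃ (c : ℕ → ℤ) (N : ℕ), (∀ l, c l ∈ ({-1, 0, 1} : Set ℤ)) ∧ d = ∑ l ∈ range N, c l * a l := by
  classical
  obtain ⟨_, ⟨Fs, hFs, rfl⟩, _, ⟨Gs, hGs, rfl⟩, rfl⟩ := hd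
  have sum_preimage_eq : ∀ Es : Finset ℤ, ↑Es ⊆ range a →
      ∑ l ∈ Es.preimage a ha.injOn, a l = ∑ y ∈ Es, y := fun Es hEs =>
    sum_preimage a Es ha.injOn id fun y hy hya => absurd (hEs hy) hya
  set F := Fs.preimage a ha.injOn
  set G := Gs.preimage a ha.injOn
  obtain ⟨N, hN⟩ := exists_nat_subset_range (F ∪ G)
  refine ⟨fun l => (if l ∈ F then 1 else 0) - (if l ∈ G then 1 else 0), N,
    fun l => by dsimp only; split_ifs <;> simp, ?_⟩
  simp only [sub_mul, ite_mul, one_mul, zero_mul, sum_sub_distrib, sum_ite_mem,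
    Finset.inter_eq_right.2 (union_subset_left hN), Finset.inter_eq_right.2 (union_subset_right hN)]
  rw [← sum_preimage_eq Fs hFs, ← sum_preimage_eq Gs hGs]

theorem exists_strictMono_forall_mem_SIP_zpow_mem
    (h : ∀ V ∈ 𝓝 x, ∃ᶠ n : ℕ in atTop, (T ^ n) x ∈ V ∧ (T ^ n)⁻¹ x ∈ V)
    {U : Set X} (hU : IsOpen U) (hxU : x ∈ U) :
    ∃ a : ℕ → ℤ, StrictMono a ∧ 0 < a 0 ∧ ∀ d ∈ SIP (range a), (T ^ d) x ∈ U := by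
  obtain ⟨a, V, ha, ha0, rfl, hxV, hV⟩ := exists_seq_isOpen_mapsTo_zpow h hU hxU
  refine ⟨a, ha, ha0, fun d hd => ?_⟩
  obtain ⟨c, N, hc, rfl⟩ := exists_sum_mul_eq_of_mem_SIP ha.injective hd
  simpa [Nat.Ico_zero_eq_range] using zpow_sum_mul_mem hxV hV hc 0 N

end

theorem hittingPt_isSIPSet_of_recurrent_symm_general {X : Type*} [MetricSpace X]
    (T : X ≃ₜ X) (x : X) (hx : IsRecurrentPt T x)
    (U : Set X) (hU : IsOpen U) (hxU : x ∈ U)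
    (J : X ≃ₜ X)
    (hJT : ∀ y, J (T y) = T.symm (J y)) (hJx : J x = x) :
    IsSIPSet (hittingPt T x U) := by
  obtain ⟨a, ha, ha0, haU⟩ := exists_strictMono_forall_mem_SIP_zpow_mem
    (fun V hV => hx.frequently_pow_mem_and_inv_pow_mem hJT hJx hV) hU hxU
  refine ⟨range a, ?_, infinite_range_of_injective ha.injective, fun d ⟨hd, hdpos⟩ => ?_⟩
  · rintro _ ⟨k, rfl⟩
    exact ha0.trans_le (ha.monotone k.zero_le)
  · exact mem_hittingPt_iff.2 ⟨hdpos, haU d hd⟩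

/-- if `x` is a recurrent point of `(X,T)`, `U` is an open set
containing `x`, and there is a homeomorphism `J` with `J ∘ J = id`,
`J ∘ T = T⁻¹ ∘ J` and `J(x) = x`, then `N(x,U)` is an SIP set. -/
theorem hittingPt_isSIPSet_of_recurrent_symm {X : Type*} [MetricSpace X] [CompactSpace X]
    (T : X ≃ₜ X) (x : X) (hx : IsRecurrentPt T x)
    (U : Set X) (hU : IsOpen U) (hxU : x ∈ U)
    (J : X ≃ₜ X) (hJinv : ∀ y, J (J y) = y)
    (hJT : ∀ y, J (T y) = T.symm (J y)) (hJx : J x = x) :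
    IsSIPSet (hittingPt T x U) :=
  hittingPt_isSIPSet_of_recurrent_symm_general T x hx U hU hxU J hJT hJx
end

section
/- Let (X,T) be a topologically transitive dynamical system in which every transitive point is recurrent, and let U, V ⊆ X be nonempty open sets. Then N(U,U) is an SIP set, and N(U,V) is a translate of an SIP set. -/
/-- `B` is a translate of an SIP set: there are an infinite set `A` of positive
integers and `u ∈ ℤ` with `(u + SIP(A))_+ ⊆ B`. -/
def IsTranslateSIPSet (B : Set ℤ) : Prop :=
  ∃ A : Set ℤ, A ⊆ {n : ℤ | 0 < n} ∧ A.Infinite ∧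
    ∃ u : ℤ, posPart ((fun t => u + t) '' SIP A) ⊆ B

/-- `(X,T)` is topologically transitive: `N(U,V) ≠ ∅` for all nonempty open `U,V`. -/
def TopTrans {X : Type*} [TopologicalSpace X] (T : X ≃ₜ X) : Prop :=
  ∀ U V : Set X, IsOpen U → IsOpen V → U.Nonempty → V.Nonempty →
    (hitting T U V).Nonempty

/-- From recurrence, a single hitting time of an open set can be pushed
arbitrarily far. -/
lemma stepUp {X : Type*} [MetricSpace X] (T : X ≃ₜ X) (x : X)
    (hx : IsRecurrentPt T x) (O : Set X) (hO : IsOpen O)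
    (base : ∃ n : ℕ, 0 < n ∧ (⇑T)^[n] x ∈ O) :
    ∀ m : ℕ, ∃ n : ℕ, m < n ∧ (⇑T)^[n] x ∈ O := by
  intro m
  induction m with
  | zero => exact base
  | succ m ih =>
    obtain ⟨n, hn, hmem⟩ := ih
    have h1 : (⇑T)^[n] x ∈ closure ((⇑T)^[n] '' {y | ∃ k : ℕ, 0 < k ∧ (⇑T)^[k] x = y}) :=
      image_closure_subset_closure_image (T.continuous.iterate n) ⟨x, hx, rfl⟩
    obtain ⟨y, hyO, hyim⟩ := (mem_closure_iff.1 h1) O hO hmem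
    obtain ⟨w, ⟨k, hk, hw⟩, rfl⟩ := hyim
    refine ⟨n + k, by omega, ?_⟩
    rw [Function.iterate_add_apply, hw]; exact hyO

lemma exists_transPt {X : Type*} [MetricSpace X] [CompactSpace X] [Nonempty X]
    (T : X ≃ₜ X) (htrans : TopTrans T) : ∃ z : X, IsTransPt T z := by
  obtain ⟨b, hbc, hbne, hbasis⟩ := TopologicalSpace.exists_countable_basis X
  have hGdense : Dense (⋂ s ∈ b, ⋃ n ∈ Set.Ioi (0 : ℕ), (⇑T)^[n] ⁻¹' s) := by
    refine dense_biInter_of_isOpen (fun s hs => ?_) hbc (fun s hs => ?_)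
    · exact isOpen_biUnion fun n _ => (T.continuous.iterate n).isOpen_preimage _
        (hbasis.isOpen hs)
    · rw [dense_iff_inter_open]
      intro O hO hOne
      have hsne : s.Nonempty := Set.nonempty_iff_ne_empty.2 (fun h => hbne (h ▸ hs))
      obtain ⟨n, hn, y, hyO, hyT⟩ := htrans O s hO (hbasis.isOpen hs) hOne hsne
      exact ⟨y, hyO, Set.mem_biUnion (by simpa using hn) hyT⟩
  obtain ⟨z, hz⟩ := hGdense.nonempty
  refine ⟨z, fun Uo hUo hUone => ?_⟩
  obtain ⟨x0, hx0⟩ := hUone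
  obtain ⟨s, hs, hx0s, hsUo⟩ := hbasis.exists_subset_of_mem_open hx0 hUo
  have := Set.mem_iInter₂.1 hz s hs
  obtain ⟨n, hn, hTn⟩ := Set.mem_iUnion₂.1 this
  exact ⟨(n : ℤ), by exact_mod_cast hn, by simpa using hsUo hTn⟩

/-- Representing elements of `IP (g '' Ici 1)` as sums over index finsets. -/
lemma IP_repr {g : ℕ → ℤ} (hg : Function.Injective g) {s : ℤ}
    (hs : s ∈ IP (g '' Set.Ici 1)) :
    ∃ Fi : Finset ℕ, (∀ i ∈ Fi, 1 ≤ i) ∧ s = ∑ i ∈ Fi, g i := by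
  obtain ⟨F, hF, rfl⟩ := hs
  have : ∃ Fi : Finset ℕ, (∀ i ∈ Fi, 1 ≤ i) ∧ Fi.image g = F := by
    induction F using Finset.induction_on with
    | empty => exact ⟨∅, by simp, by simp⟩
    | @insert z F hzF ih =>
      obtain ⟨Fi, h1, himg⟩ := ih (fun w hw => hF (Finset.mem_insert_of_mem hw))
      obtain ⟨k, hk, rfl⟩ := hF (Finset.mem_insert_self z F)
      refine ⟨insert k Fi, ?_, ?_⟩
      · intro i hi
        rcases Finset.mem_insert.1 hi with rfl | hi
        · exact hk
        · exact h1 i hi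
      · rw [Finset.image_insert, himg]
  obtain ⟨Fi, h1, rfl⟩ := this
  exact ⟨Fi, h1, Finset.sum_image (fun i _ j _ h => hg h)⟩

/-- if `(X,T)` is topologically transitive and every transitive
point is recurrent, then for all nonempty open `U, V`, the set `N(U,U)` is an
SIP set and `N(U,V)` is a translate of an SIP set. -/
theorem hitting_sip_of_transitive {X : Type*} [MetricSpace X] [CompactSpace X]
    (T : X ≃ₜ X) (htrans : TopTrans T)
    (hrec : ∀ x : X, IsTransPt T x → IsRecurrentPt T x)
    (U V : Set X) (hU : IsOpen U) (hV : IsOpen V)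
    (hUne : U.Nonempty) (hVne : V.Nonempty) :
    IsSIPSet (hitting T U U) ∧ IsTranslateSIPSet (hitting T U V) := by
  have : Nonempty X := ⟨hUne.some⟩
  obtain ⟨z, hz⟩ := exists_transPt T htrans
  have hzrec : IsRecurrentPt T z := hrec z hz
  -- z hits every nonempty open set at arbitrarily large times
  have Hz : ∀ O : Set X, IsOpen O → O.Nonempty → ∀ m : ℕ,
      ∃ n : ℕ, m < n ∧ (⇑T)^[n] z ∈ O := by
    intro O hO hOne
    refine stepUp T z hzrec O hO ?_
    obtain ⟨n, hn, hmem⟩ := hz O hO hOne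
    exact ⟨n.toNat, by omega, hmem⟩
  -- pick a transitive point x inside U
  obtain ⟨m, hm, hmU⟩ := Hz U hU hUne 0
  set x : X := (⇑T)^[m] z with hxdef
  have hxU : x ∈ U := hmU
  have hxtrans : IsTransPt T x := by
    intro O hO hOne
    obtain ⟨n, hn, hmem⟩ := Hz O hO hOne m
    refine ⟨((n - m : ℕ) : ℤ), by exact_mod_cast Nat.sub_pos_of_lt hn, ?_⟩
    have : ((n - m : ℕ) : ℤ).toNat = n - m := by omega
    rw [this, hxdef, ← Function.iterate_add_apply, Nat.sub_add_cancel hn.le]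
    exact hmem
  have hxrec : IsRecurrentPt T x := hrec x hxtrans
  -- x hits every open neighbourhood of itself at arbitrarily large times
  have Hx : ∀ O : Set X, IsOpen O → x ∈ O → ∀ m : ℕ,
      ∃ n : ℕ, m < n ∧ (⇑T)^[n] x ∈ O := by
    intro O hO hxO
    refine stepUp T x hxrec O hO ?_
    obtain ⟨y, hyO, k, hk, hky⟩ := (mem_closure_iff.1 hxrec) O hO hxO
    exact ⟨k, hk, hky ▸ hyO⟩
  -- pick u with T^u x ∈ V
  obtain ⟨uZ, huZ, huV⟩ := hxtrans V hV hVne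
  set u : ℕ := uZ.toNat with hudef
  have hu : 0 < u := by omega
  have huVx : (⇑T)^[u] x ∈ V := huV
  -- the auxiliary neighbourhood W
  set W : Set X := U ∩ (⇑T)^[u] ⁻¹' V with hWdef
  have hWopen : IsOpen W := hU.inter ((T.continuous.iterate u).isOpen_preimage _ hV)
  have hxW : x ∈ W := ⟨hxU, huVx⟩
  have hWU : W ⊆ U := fun y hy => hy.1
  have hWV : W ⊆ (⇑T)^[u] ⁻¹' V := fun y hy => hy.2
  -- the recursive construction
  have step : ∀ p : {p : ℕ × Set X // IsOpen p.2 ∧ x ∈ p.2 ∧ p.2 ⊆ W},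
      ∃ q : {p : ℕ × Set X // IsOpen p.2 ∧ x ∈ p.2 ∧ p.2 ⊆ W},
        p.1.1 < q.1.1 ∧ q.1.2 ⊆ p.1.2 ∧ q.1.2 ⊆ (⇑T)^[q.1.1] ⁻¹' p.1.2 := by
    rintro ⟨⟨nn, O⟩, hO, hxO, hOW⟩
    obtain ⟨a, ha, hTa⟩ := Hx O hO hxO nn
    exact ⟨⟨⟨a, O ∩ (⇑T)^[a] ⁻¹' O⟩,
      hO.inter ((T.continuous.iterate a).isOpen_preimage _ hO),
      ⟨hxO, hTa⟩, fun y hy => hOW hy.1⟩, ha, fun y hy => hy.1, fun y hy => hy.2⟩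
  choose f hf1 hf2 hf3 using step
  set D : ℕ → {p : ℕ × Set X // IsOpen p.2 ∧ x ∈ p.2 ∧ p.2 ⊆ W} :=
    fun k => f^[k] ⟨⟨0, W⟩, hWopen, hxW, subset_rfl⟩ with hDdef
  set a : ℕ → ℕ := fun k => (D k).1.1 with hadef
  set Vk : ℕ → Set X := fun k => (D k).1.2 with hVkdef
  have hDsucc : ∀ k, D (k + 1) = f (D k) := fun k => Function.iterate_succ_apply' f k _
  have ha0 : a 0 = 0 := rfl
  have hVk0 : Vk 0 = W := rfl
  have hstep1 : ∀ k, a k < a (k + 1) := fun k => by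
    rw [hadef]; simp only [hDsucc]; exact hf1 (D k)
  have hstep2 : ∀ k, Vk (k + 1) ⊆ Vk k := fun k => by
    rw [hVkdef]; simp only [hDsucc]; exact hf2 (D k)
  have hstep3 : ∀ k, Vk (k + 1) ⊆ (⇑T)^[a (k + 1)] ⁻¹' Vk k := fun k => by
    rw [hVkdef, hadef]; simp only [hDsucc]; exact hf3 (D k)
  have hamono : StrictMono a := strictMono_nat_of_lt_succ hstep1
  have hVanti : ∀ {j k : ℕ}, j ≤ k → Vk k ⊆ Vk j := by
    intro j k hjk
    induction hjk with
    | refl => exact subset_rfl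
    | step h ih => exact (hstep2 _).trans ih
  have hxVk : ∀ k, x ∈ Vk k := fun k => (D k).2.2.1
  -- key combinatorial lemma
  have C : ∀ n m : ℕ, m ≤ n → ∀ F : Finset ℕ, (∀ i ∈ F, m < i ∧ i ≤ n) →
      ∀ y ∈ Vk n, (⇑T)^[∑ i ∈ F, a i] y ∈ Vk m := by
    intro n
    induction n with
    | zero =>
      intro m hm F hF y hy
      have hFe : F = ∅ := Finset.eq_empty_of_forall_notMem fun i hi => by
        have := hF i hi; omega
      interval_cases m
      simp [hFe, hy]
    | succ n ih =>
      intro m hm F hF y hy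
      by_cases hmem : (n + 1) ∈ F
      · have hm' : m ≤ n := by have := (hF _ hmem).1; omega
        have hsum : ∑ i ∈ F, a i = (∑ i ∈ F.erase (n + 1), a i) + a (n + 1) :=
          (Finset.sum_erase_add _ _ hmem).symm
        rw [hsum, Function.iterate_add_apply]
        have h1 : (⇑T)^[a (n + 1)] y ∈ Vk n := hstep3 n hy
        refine ih m hm' (F.erase (n + 1)) (fun i hi => ?_) _ h1
        have h2 := hF i (Finset.mem_of_mem_erase hi)
        have h3 := Finset.ne_of_mem_erase hi
        omega
      · rcases Nat.lt_or_ge m (n + 1) with hlt | hge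
        · have hm' : m ≤ n := by omega
          refine ih m hm' F (fun i hi => ?_) y (hstep2 n hy)
          have h2 := hF i hi
          rcases Nat.lt_or_ge i (n + 1) with h | h
          · omega
          · exact absurd (by omega : i = n + 1) (fun h' => hmem (h' ▸ hi))
        · have hFe : F = ∅ := Finset.eq_empty_of_forall_notMem fun i hi => by
            have := hF i hi; omega
          have hmeq : m = n + 1 := by omega
          simp [hFe, hmeq, hy]
  -- the IP generating set
  set g : ℕ → ℤ := fun k => ((a k : ℕ) : ℤ) with hgdef
  have hginj : Function.Injective g := by
    intro i j h
    simp only [hgdef] at h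
    exact hamono.injective (by exact_mod_cast h)
  set A : Set ℤ := g '' Set.Ici 1 with hAdef
  have hApos : A ⊆ {n : ℤ | 0 < n} := by
    rintro _ ⟨k, hk, rfl⟩
    have : 0 < a k := by
      calc 0 = a 0 := ha0.symm
      _ < a k := hamono (by exact hk)
    simp only [hgdef, Set.mem_setOf_eq]
    exact_mod_cast this
  have hAinf : A.Infinite :=
    (Set.Ici_infinite 1).image (fun i _ j _ h => hginj h)
  -- IP sums land in W
  have hIPW : ∀ Fi : Finset ℕ, (∀ i ∈ Fi, 1 ≤ i) → (⇑T)^[∑ i ∈ Fi, a i] x ∈ W := by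
    intro Fi h1
    set N := Fi.sup id with hN
    have := C N 0 (Nat.zero_le _) Fi
      (fun i hi => ⟨h1 i hi, Finset.le_sup (f := id) hi⟩) x (hxVk N)
    rwa [hVk0] at this
  constructor
  · refine ⟨A, hApos, hAinf, ?_⟩
    rintro d ⟨⟨s, hs, t, ht, rfl⟩, hdpos⟩
    obtain ⟨Fs, hFs1, rfl⟩ := IP_repr hginj hs
    obtain ⟨Ft, hFt1, rfl⟩ := IP_repr hginj ht
    set ns : ℕ := ∑ i ∈ Fs, a i with hns
    set nt : ℕ := ∑ i ∈ Ft, a i with hnt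
    have hscast : ∑ i ∈ Fs, g i = (ns : ℤ) := by rw [hns]; push_cast [hgdef]; rfl
    have htcast : ∑ i ∈ Ft, g i = (nt : ℤ) := by rw [hnt]; push_cast [hgdef]; rfl
    rw [hscast, htcast] at hdpos ⊢
    simp only [Set.mem_setOf_eq] at hdpos
    have hlt : nt < ns := by omega
    refine ⟨hdpos, (⇑T)^[nt] x, hWU (hIPW Ft hFt1), ?_⟩
    have htn : ((ns : ℤ) - nt).toNat = ns - nt := by omega
    rw [htn, ← Function.iterate_add_apply, Nat.sub_add_cancel hlt.le]
    exact hWU (hIPW Fs hFs1)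
  · refine ⟨A, hApos, hAinf, (u : ℤ), ?_⟩
    rintro e ⟨⟨d, ⟨s, hs, t, ht, rfl⟩, rfl⟩, hepos⟩
    obtain ⟨Fs, hFs1, rfl⟩ := IP_repr hginj hs
    obtain ⟨Ft, hFt1, rfl⟩ := IP_repr hginj ht
    set ns : ℕ := ∑ i ∈ Fs, a i with hns
    set nt : ℕ := ∑ i ∈ Ft, a i with hnt
    have hscast : ∑ i ∈ Fs, g i = (ns : ℤ) := by rw [hns]; push_cast [hgdef]; rfl
    have htcast : ∑ i ∈ Ft, g i = (nt : ℤ) := by rw [hnt]; push_cast [hgdef]; rfl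
    rw [hscast, htcast] at hepos ⊢
    simp only [Set.mem_setOf_eq] at hepos
    refine ⟨hepos, (⇑T)^[nt] x, hWU (hIPW Ft hFt1), ?_⟩
    have htn : ((u : ℤ) + ((ns : ℤ) - nt)).toNat + nt = u + ns := by omega
    rw [← Function.iterate_add_apply, htn, Function.iterate_add_apply]
    exact hWV (hIPW Fs hFs1)
end

section
/- Let a ∈ ℝ be irrational. Then there is no infinite subset A of ℕ such that for every positive element t of SIP(A) the fractional part of t·a lies in [0, 1/8); that is, the set {n ∈ ℕ : the fractional part of n·a lies in [0, 1/8)} is not an SIP set. -/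
/-!
Write `β x` for the fractional part of `x a`. If every positive element of `SIP(A)` has
`β < c ≤ 1/2`, then no carries occur when summing over finite subsets of `A`, so
`∑_{x ∈ F} β x = β (σ_F) < c` for every finite `F ⊆ A`. As `a` is irrational, `β > 0` on `A`,
hence for `x₀ ∈ A` only finitely many `y ∈ A` satisfy `β x₀ ≤ β y`. Any other `y > x₀` in `A`
gives `β (y - x₀) = 1 + β y - β x₀ > 1 - c ≥ c`, although `y - x₀ ∈ SIP(A)_+`.
-/

namespace Int

variable {R : Type*} [Field R] [LinearOrder R] [IsStrictOrderedRing R] [FloorRing R]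

theorem fract_add_eq_of_fract_add_fract_lt_one {x y : R} (h : fract x + fract y < 1) :
    fract (x + y) = fract x + fract y := by
  refine fract_eq_iff.2 ⟨add_nonneg (fract_nonneg x) (fract_nonneg y), h, ⌊x⌋ + ⌊y⌋, ?_⟩
  push_cast
  rw [fract, fract]
  ring

theorem fract_sub_eq_of_fract_lt {x y : R} (h : fract x < fract y) :
    fract (x - y) = fract x - fract y + 1 := by
  refine fract_eq_iff.2 ⟨by linarith [fract_lt_one y, fract_nonneg x], by linarith,
    ⌊x⌋ - ⌊y⌋ - 1, ?_⟩
  push_cast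
  rw [fract, fract]
  ring

theorem fract_sum_eq_sum_fract {ι : Type*} (F : Finset ι) (f : ι → R)
    (h : ∀ G ⊆ F, fract (∑ i ∈ G, f i) < 1 / 2) :
    fract (∑ i ∈ F, f i) = ∑ i ∈ F, fract (f i) := by
  classical
  induction F using Finset.induction_on with
  | empty => simp
  | insert x G hx ih =>
    have hG : fract (∑ i ∈ G, f i) = ∑ i ∈ G, fract (f i) :=
      ih fun G' hG' => h G' (hG'.trans (Finset.subset_insert x G))
    have hx_lt : fract (f x) < 1 / 2 := by
      simpa using h {x} (Finset.singleton_subset_iff.2 (Finset.mem_insert_self x G))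
    have hG_lt := h G (Finset.subset_insert x G)
    rw [Finset.sum_insert hx, Finset.sum_insert hx, ← hG,
      fract_add_eq_of_fract_add_fract_lt_one (by linarith)]

end Int

theorem Set.finite_sep_le_of_forall_sum_le {α R : Type*} [Field R] [LinearOrder R]
    [IsStrictOrderedRing R] [Archimedean R] {s : Set α} {f : α → R} {b C : R} (hb : 0 < b)
    (hsum : ∀ F : Finset α, ↑F ⊆ s → ∑ x ∈ F, f x ≤ C) : {x ∈ s | b ≤ f x}.Finite := by
  by_contra hinf
  obtain ⟨n, hn⟩ := exists_nat_gt (C / b)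
  obtain ⟨F, hFs, rfl⟩ := Set.Infinite.exists_subset_card_eq hinf n
  have hlow : (F.card : R) * b ≤ ∑ x ∈ F, f x := by
    simpa using Finset.card_nsmul_le_sum F f b fun x hx => (hFs hx).2
  have hup := hsum F fun x hx => (hFs hx).1
  rw [div_lt_iff₀ hb] at hn
  linarith

theorem Irrational.fract_intCast_mul_pos {a : ℝ} (ha : Irrational a) {n : ℤ} (hn : n ≠ 0) :
    0 < Int.fract ((n : ℝ) * a) :=
  Int.fract_pos.2 ((ha.intCast_mul hn).ne_int _)

section SIP

variable {A : Set ℤ}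

theorem mem_IP_of_mem {x : ℤ} (hx : x ∈ A) : x ∈ IP A :=
  ⟨{x}, by simpa using hx, by simp⟩

theorem mem_SIP_of_mem_IP {s : ℤ} (hs : s ∈ IP A) : s ∈ SIP A :=
  ⟨s, hs, 0, ⟨∅, by simp, by simp⟩, by ring⟩

theorem sub_mem_SIP {x y : ℤ} (hx : x ∈ A) (hy : y ∈ A) : x - y ∈ SIP A :=
  ⟨x, mem_IP_of_mem hx, y, mem_IP_of_mem hy, rfl⟩

theorem sum_mem_posPart_SIP (hA : A ⊆ {n : ℤ | 0 < n}) {F : Finset ℤ} (hF : ↑F ⊆ A)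
    (hne : F.Nonempty) : ∑ x ∈ F, x ∈ posPart (SIP A) :=
  ⟨mem_SIP_of_mem_IP ⟨F, hF, rfl⟩, Set.mem_ofPred.2 <|
    Finset.sum_pos (fun _ hx => Set.mem_ofPred.1 (hA (hF hx))) hne⟩

theorem sum_fract_mul_lt_of_posPart_SIP_subset {a c : ℝ} (hA : A ⊆ {n : ℤ | 0 < n})
    (hc₀ : 0 < c) (hc : c ≤ 1 / 2)
    (hSIP : posPart (SIP A) ⊆ {n : ℤ | Int.fract ((n : ℝ) * a) < c})
    {F : Finset ℤ} (hF : ↑F ⊆ A) : ∑ x ∈ F, Int.fract ((x : ℝ) * a) < c := by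
  have hsum_lt : ∀ G ⊆ F, Int.fract (∑ x ∈ G, (x : ℝ) * a) < c := by
    intro G hG
    rcases G.eq_empty_or_nonempty with rfl | hne
    · simpa using hc₀
    · have := hSIP (sum_mem_posPart_SIP hA ((Finset.coe_subset.2 hG).trans hF) hne)
      simpa [Finset.sum_mul] using this
  rw [← Int.fract_sum_eq_sum_fract F _ fun G hG => (hsum_lt G hG).trans_le hc]
  exact hsum_lt F subset_rfl

end SIP

theorem not_isSIPSet_setOf_fract_lt {a c : ℝ} (ha : Irrational a) (hc : c ≤ 1 / 2) :
    ¬ IsSIPSet {n : ℤ | 0 < n ∧ Int.fract ((n : ℝ) * a) < c} := by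
  rintro ⟨A, hApos, hAinf, hSIP⟩
  replace hSIP : posPart (SIP A) ⊆ {n : ℤ | Int.fract ((n : ℝ) * a) < c} :=
    hSIP.trans fun n hn => hn.2
  obtain ⟨x₀, hx₀⟩ := hAinf.nonempty
  have hfract_x₀_pos : 0 < Int.fract ((x₀ : ℝ) * a) := ha.fract_intCast_mul_pos (hApos hx₀).ne'
  have hfract_x₀_lt : Int.fract ((x₀ : ℝ) * a) < c :=
    hSIP ⟨mem_SIP_of_mem_IP (mem_IP_of_mem hx₀), hApos hx₀⟩
  have hc₀ : 0 < c := hfract_x₀_pos.trans hfract_x₀_lt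
  have hfin : {y ∈ A | Int.fract ((x₀ : ℝ) * a) ≤ Int.fract ((y : ℝ) * a)}.Finite :=
    Set.finite_sep_le_of_forall_sum_le hfract_x₀_pos fun F hF =>
      (sum_fract_mul_lt_of_posPart_SIP_subset hApos hc₀ hc hSIP hF).le
  obtain ⟨y, hyA, hy⟩ := (hAinf.sdiff (hfin.union (Set.finite_Icc 0 x₀))).nonempty
  simp only [Set.mem_union, Set.mem_ofPred_eq, Set.mem_Icc, not_or, not_and, not_le] at hy
  have hlt : x₀ < y := by linarith [hy.2 (hApos hyA).le]
  have hdiff := hSIP ⟨sub_mem_SIP hyA hx₀, sub_pos.2 hlt⟩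
  simp only [Set.mem_ofPred_eq, Int.cast_sub, sub_mul] at hdiff
  rw [Int.fract_sub_eq_of_fract_lt (hy.1 hyA)] at hdiff
  linarith [Int.fract_nonneg ((y : ℝ) * a)]

/-- for irrational `a`, the set of positive integers `n` for which
the fractional part of `n·a` lies in `[0, 1/8)` is not an SIP set; equivalently,
there is no infinite `A ⊆ ℕ` such that every positive element `t` of `SIP(A)`
has the fractional part of `t·a` in `[0, 1/8)`. -/
theorem not_isSIPSet_fract_lt (a : ℝ) (ha : Irrational a) :
    ¬ IsSIPSet {n : ℤ | 0 < n ∧ Int.fract ((n : ℝ) * a) < 1 / 8} :=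
  not_isSIPSet_setOf_fract_lt ha (by norm_num)
end

section
/- A dynamical system (X,T) is mild mixing if and only if for every topologically transitive dynamical system (Y,S) the product system (X × Y, T × S) is topologically transitive. -/
/-- `(X,T)` is mild mixing: for all nonempty open `U,V`, the set `N(U,V)` meets
every SIP subset of `ℕ`. -/
def MildMixing {X : Type*} [TopologicalSpace X] (T : X ≃ₜ X) : Prop :=
  ∀ U V : Set X, IsOpen U → IsOpen V → U.Nonempty → V.Nonempty →
    ∀ A : Set ℤ, A ⊆ {n : ℤ | 0 < n} → IsSIPSet A → (hitting T U V ∩ A).Nonempty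

/-!
If `(Y,S)` is transitive, every nonempty open `W` returns to itself along an SIP set: choose
nested nonempty open sets `W = P₀ ⊇ P₁ ⊇ ⋯` with `P (k+1) ⊆ P k ∩ S^{-a k} (P k)` and `a`
increasing; then every finite sum of the `a k` maps a deep enough `P K` into `W`, so positive
differences of two such sums are return times of `W`. Mild mixing of `T` then provides a common
hitting time for `T` and `S`.

Conversely, given an SIP set generated by an infinite `A`, pick `b 0 < b 1 < ⋯` in `A` growing
faster than their partial sums. The set `D` of finite sums of the `b k` agrees with `D - b k` on
ever larger windows, so the shift on the orbit closure of the indicator of `D` is transitive,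
while its return times to the cylinder `{y | y 0 = true}` lie in `(D - D)₊ ⊆ SIP(A)₊`.
-/

open Set Function

lemma IP_mono {A B : Set ℤ} (h : A ⊆ B) : IP A ⊆ IP B :=
  fun _ ⟨F, hF, hs⟩ => ⟨F, hF.trans h, hs⟩

lemma zero_mem_IP (A : Set ℤ) : (0 : ℤ) ∈ IP A := ⟨∅, by simp, by simp⟩

lemma IP_range {ι : Type*} {f : ι → ℤ} (hf : Injective f) :
    IP (range f) = range fun J : Finset ι => ∑ j ∈ J, f j := by
  classical
  ext s
  constructor
  · rintro ⟨F, hF, rfl⟩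
    rw [← image_univ, Finset.subset_set_image_iff] at hF
    obtain ⟨J, -, rfl⟩ := hF
    exact ⟨J, by rw [Finset.sum_image fun _ _ _ _ h => hf h]⟩
  · rintro ⟨J, rfl⟩
    exact ⟨J.image f, by simp, by rw [Finset.sum_image fun _ _ _ _ h => hf h]⟩

section Hitting

variable {X Y : Type*} [TopologicalSpace X] [TopologicalSpace Y]

lemma hitting_mono {T : X ≃ₜ X} {U U₁ V V₁ : Set X} (hU : U ⊆ U₁) (hV : V ⊆ V₁) :
    hitting T U V ⊆ hitting T U₁ V₁ :=
  fun _ ⟨hn, x, hx, hxV⟩ => ⟨hn, x, hU hx, hV hxV⟩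

lemma add_mem_hitting {T : X ≃ₜ X} {U V : Set X} {m n : ℤ} (hm : 0 < m)
    (hn : n ∈ hitting T U ((⇑T)^[m.toNat] ⁻¹' V)) : m + n ∈ hitting T U V := by
  obtain ⟨hn, x, hx, hxV⟩ := hn
  refine ⟨by omega, x, hx, ?_⟩
  rwa [show (m + n).toNat = m.toNat + n.toNat by omega, iterate_add_apply]

lemma hitting_prodCongr (T : X ≃ₜ X) (S : Y ≃ₜ Y) (U V : Set X) (U' V' : Set Y) :
    hitting (T.prodCongr S) (U ×ˢ U') (V ×ˢ V') = hitting T U V ∩ hitting S U' V' := by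
  ext n
  simp only [hitting, Homeomorph.coe_prodCongr, Prod.map_iterate, mem_ofPred_eq, mem_inter_iff,
    mem_prod, Prod.exists, Prod.map_fst, Prod.map_snd]
  constructor
  · rintro ⟨hn, x, y, ⟨hx, hy⟩, hxV, hyV⟩
    exact ⟨⟨hn, x, hx, hxV⟩, hn, y, hy, hyV⟩
  · rintro ⟨⟨hn, x, hx, hxV⟩, -, y, hy, hyV⟩
    exact ⟨hn, x, y, ⟨hx, hy⟩, hxV, hyV⟩

lemma topTrans_prodCongr_iff {T : X ≃ₜ X} {S : Y ≃ₜ Y} :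
    TopTrans (T.prodCongr S) ↔ ∀ (U V : Set X) (U' V' : Set Y), IsOpen U → IsOpen V →
      IsOpen U' → IsOpen V' → U.Nonempty → V.Nonempty → U'.Nonempty → V'.Nonempty →
        (hitting T U V ∩ hitting S U' V').Nonempty := by
  constructor
  · intro h U V U' V' hU hV hU' hV' hUne hVne hU'ne hV'ne
    rw [← hitting_prodCongr]
    exact h _ _ (hU.prod hU') (hV.prod hV') (hUne.prod hU'ne) (hVne.prod hV'ne)
  · rintro h O₁ O₂ hO₁ hO₂ ⟨⟨x₁, y₁⟩, hp₁⟩ ⟨⟨x₂, y₂⟩, hp₂⟩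
    obtain ⟨U, U', hU, hU', hx₁, hy₁, hO₁'⟩ := isOpen_prod_iff.1 hO₁ x₁ y₁ hp₁
    obtain ⟨V, V', hV, hV', hx₂, hy₂, hO₂'⟩ := isOpen_prod_iff.1 hO₂ x₂ y₂ hp₂
    have := h U V U' V' hU hV hU' hV' ⟨x₁, hx₁⟩ ⟨x₂, hx₂⟩ ⟨y₁, hy₁⟩ ⟨y₂, hy₂⟩
    rw [← hitting_prodCongr] at this
    exact this.mono (hitting_mono hO₁' hO₂')

end Hitting

lemma iterate_sum_mem_of_nested {Y : Type*} {f : Y → Y} {P : ℕ → Set Y} {a : ℕ → ℕ}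
    (hP : ∀ k, P (k + 1) ⊆ P k ∩ f^[a k] ⁻¹' P k) {K : ℕ} {J : Finset ℕ}
    (hJ : J ⊆ Finset.range K) {y : Y} (hy : y ∈ P K) : f^[∑ j ∈ J, a j] y ∈ P 0 := by
  induction K generalizing J y with
  | zero => simp_all
  | succ K ih =>
    rw [Finset.range_add_one] at hJ
    by_cases hK : K ∈ J
    · rw [← Finset.add_sum_erase J a hK, add_comm, iterate_add_apply]
      exact ih (Finset.subset_insert_iff.1 hJ) (hP K hy).2
    · exact ih ((Finset.subset_insert_iff_of_notMem hK).1 hJ) (hP K hy).1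

section Recurrence

variable {Y : Type*} [TopologicalSpace Y]

lemma TopTrans.exists_return_gt {S : Y ≃ₜ Y} (hS : TopTrans S) {P : Set Y} (hP : IsOpen P)
    (hne : P.Nonempty) (n : ℕ) : ∃ a, n < a ∧ (P ∩ (⇑S)^[a] ⁻¹' P).Nonempty := by
  induction n with
  | zero =>
    obtain ⟨a, ha, x, hx, hxP⟩ := hS P P hP hP hne hne
    exact ⟨a.toNat, by omega, x, hx, hxP⟩
  | succ n ih =>
    obtain ⟨a, hna, hQne⟩ := ih
    have hQ : IsOpen (P ∩ (⇑S)^[a] ⁻¹' P) := hP.inter (hP.preimage (S.continuous.iterate a))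
    obtain ⟨c, hc, y, hy, hyQ⟩ := hS _ _ hQ hQ hQne hQne
    refine ⟨a + c.toNat, by omega, y, hy.1, ?_⟩
    rw [mem_preimage, iterate_add_apply]
    exact hyQ.2

lemma TopTrans.exists_nested_return_times {S : Y ≃ₜ Y} (hS : TopTrans S) {W : Set Y}
    (hW : IsOpen W) (hne : W.Nonempty) :
    ∃ (P : ℕ → Set Y) (a : ℕ → ℕ), P 0 = W ∧ StrictMono a ∧ 0 < a 0 ∧
      (∀ k, (P k).Nonempty) ∧ ∀ k, P (k + 1) ⊆ P k ∩ (⇑S)^[a k] ⁻¹' P k := by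
  choose! ret hret using fun (Q : Set Y) (n : ℕ) (hQ : IsOpen Q) (hQne : Q.Nonempty) =>
    hS.exists_return_gt hQ hQne n
  let step : Set Y × ℕ → Set Y × ℕ := fun p =>
    (p.1 ∩ (⇑S)^[ret p.1 p.2] ⁻¹' p.1, ret p.1 p.2)
  let P k := (step^[k] (W, 0)).1
  let a k := ret (P k) (step^[k] (W, 0)).2
  have hstep : ∀ k, step^[k + 1] (W, 0) = (P k ∩ (⇑S)^[a k] ⁻¹' P k, a k) := fun k => by
    rw [iterate_succ_apply']
  have hP : ∀ k, IsOpen (P k) ∧ (P k).Nonempty := by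
    intro k
    induction k with
    | zero => exact ⟨hW, hne⟩
    | succ k ih =>
      simp only [P, hstep]
      exact ⟨ih.1.inter (ih.1.preimage (S.continuous.iterate _)), (hret _ _ ih.1 ih.2).2⟩
  refine ⟨P, a, rfl, strictMono_nat_of_lt_succ fun k => ?_, (hret _ _ hW hne).1,
    fun k => (hP k).2, fun k => by simp only [P, hstep]; rfl⟩
  show a k < ret (P (k + 1)) (step^[k + 1] (W, 0)).2
  rw [hstep]
  exact (hret _ _ (hP _).1 (hP _).2).1

lemma isSIPSet_hitting_of_nested {S : Y ≃ₜ Y} {P : ℕ → Set Y} {a : ℕ → ℕ}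
    (ha : StrictMono a) (ha₀ : 0 < a 0) (hne : ∀ k, (P k).Nonempty)
    (hP : ∀ k, P (k + 1) ⊆ P k ∩ (⇑S)^[a k] ⁻¹' P k) : IsSIPSet (hitting S (P 0) (P 0)) := by
  have hinj : Injective fun k => (a k : ℤ) := Nat.cast_injective.comp ha.injective
  refine ⟨range fun k => (a k : ℤ), ?_, infinite_range_of_injective hinj, ?_⟩
  · rintro _ ⟨k, rfl⟩
    exact Int.natCast_pos.2 (ha₀.trans_le (ha.monotone k.zero_le))
  rintro _ ⟨⟨s, hs, t, ht, rfl⟩, hst⟩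
  rw [IP_range hinj] at hs ht
  obtain ⟨Js, rfl⟩ := hs
  obtain ⟨Jt, rfl⟩ := ht
  obtain ⟨K, hK⟩ := Finset.exists_nat_subset_range (Js ∪ Jt)
  obtain ⟨y, hy⟩ := hne K
  have hs := iterate_sum_mem_of_nested hP (Finset.union_subset_left hK) hy
  have ht := iterate_sum_mem_of_nested hP (Finset.union_subset_right hK) hy
  simp only [mem_ofPred_eq, ← Nat.cast_sum] at hst ⊢
  refine ⟨hst, _, ht, ?_⟩
  rwa [← iterate_add_apply, show ((∑ j ∈ Js, a j : ℕ) - (∑ j ∈ Jt, a j : ℕ) : ℤ).toNat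
    + ∑ j ∈ Jt, a j = ∑ j ∈ Js, a j by omega]

lemma TopTrans.isSIPSet_hitting_self {S : Y ≃ₜ Y} (hS : TopTrans S) {W : Set Y} (hW : IsOpen W)
    (hne : W.Nonempty) : IsSIPSet (hitting S W W) := by
  obtain ⟨P, a, rfl, ha, ha₀, hPne, hP⟩ := hS.exists_nested_return_times hW hne
  exact isSIPSet_hitting_of_nested ha ha₀ hPne hP

end Recurrence

theorem MildMixing.topTrans_prodCongr {X Y : Type*} [TopologicalSpace X] [TopologicalSpace Y]
    {T : X ≃ₜ X} (hT : MildMixing T) {S : Y ≃ₜ Y} (hS : TopTrans S) :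
    TopTrans (T.prodCongr S) := by
  refine topTrans_prodCongr_iff.2 fun U V U' V' hU hV hU' hV' hUne hVne hU'ne hV'ne => ?_
  obtain ⟨m, hm, y, hyU', hyV'⟩ := hS U' V' hU' hV' hU'ne hV'ne
  have hW : IsOpen (U' ∩ (⇑S)^[m.toNat] ⁻¹' V') :=
    hU'.inter (hV'.preimage (S.continuous.iterate _))
  have hV₂ : IsOpen ((⇑T)^[m.toNat] ⁻¹' V) := hV.preimage (T.continuous.iterate _)
  obtain ⟨k, hkT, hkS⟩ := hT U _ hU hV₂ hUne (hVne.preimage (T.surjective.iterate _)) _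
    (fun _ h => h.1) (hS.isSIPSet_hitting_self hW ⟨y, hyU', hyV'⟩)
  exact ⟨m + k, add_mem_hitting hm hkT,
    add_mem_hitting hm (hitting_mono inter_subset_left inter_subset_right hkS)⟩

lemma exists_gt_of_infinite {A : Set ℤ} (hpos : A ⊆ {n | 0 < n}) (hA : A.Infinite) (c : ℤ) :
    ∃ x ∈ A, c < x := by
  have : ¬BddAbove A := fun h => hA (BddBelow.finite_of_bddAbove ⟨0, fun x hx => (hpos hx).le⟩ h)
  exact not_bddAbove_iff.1 this c

lemma exists_seq_mem_sum_add_lt {A : Set ℤ} (hA : ∀ c, ∃ x ∈ A, c < x) :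
    ∃ b : ℕ → ℤ, ∀ k, b k ∈ A ∧ ∑ i ∈ Finset.range k, b i + k < b k := by
  choose pick hpickA hpick using hA
  let partialSum : ℕ → ℤ := fun k => Nat.rec 0 (fun k s => s + pick (s + k)) k
  have hsum : ∀ k, partialSum k = ∑ i ∈ Finset.range k, pick (partialSum i + i) := by
    intro k
    induction k with
    | zero => rfl
    | succ k ih => rw [Finset.sum_range_succ, ← ih]
  exact ⟨fun k => pick (partialSum k + k), fun k => ⟨hpickA _, hsum k ▸ hpick _⟩⟩

section Superincreasing

variable {b : ℕ → ℤ} (hb : ∀ k, 0 < b k) (hsum : ∀ k, ∑ i ∈ Finset.range k, b i + k < b k)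
include hb hsum

lemma strictMono_of_sum_add_lt : StrictMono b := strictMono_nat_of_lt_succ fun k => by
  have h := hsum (k + 1)
  rw [Finset.sum_range_succ] at h
  have := Finset.sum_nonneg fun i (_ : i ∈ Finset.range k) => (hb i).le
  omega

/-- The growth of `b` forces `b k` into every representation of `x + b k`: later terms are too
large, and the earlier ones together are too small. -/
lemma add_mem_IP_range_iff {x : ℤ} {k : ℕ} (hx : |x| ≤ k) :
    x + b k ∈ IP (range b) ↔ x ∈ IP (range b) := by
  have hmono := strictMono_of_sum_add_lt hb hsum
  have hle : ∀ {J : Finset ℕ} {i}, i ∈ J → b i ≤ ∑ j ∈ J, b j :=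
    fun hi => Finset.single_le_sum (fun j _ => (hb j).le) hi
  obtain ⟨hx₁, hx₂⟩ := abs_le.1 hx
  have hk := hsum k
  have hk' := hsum (k + 1)
  rw [Finset.sum_range_succ] at hk'
  have hpre := Finset.sum_nonneg fun i (_ : i ∈ Finset.range k) => (hb i).le
  rw [IP_range hmono.injective]
  constructor
  · rintro ⟨J, hJ : ∑ j ∈ J, b j = x + b k⟩
    have hJk : ∀ i ∈ J, i ≤ k := fun i hi => by
      by_contra! h
      have := hle hi
      have := hmono.monotone (show k + 1 ≤ i by omega)
      omega
    have hkJ : k ∈ J := by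
      by_contra h
      have hJ' : J ⊆ Finset.range k := fun i hi =>
        Finset.mem_range.2 (lt_of_le_of_ne (hJk i hi) fun e => h (e ▸ hi))
      have := Finset.sum_le_sum_of_subset_of_nonneg hJ' fun i _ _ => (hb i).le
      omega
    refine ⟨J.erase k, show ∑ j ∈ J.erase k, b j = x from ?_⟩
    have := Finset.add_sum_erase J b hkJ
    omega
  · rintro ⟨J, rfl : ∑ j ∈ J, b j = x⟩
    have hJ : J ⊆ Finset.range k := fun i hi =>
      Finset.mem_range.2 (hmono.lt_iff_lt.1 (by have := hle hi; omega))
    have hkJ : k ∉ J := fun h => by simpa using hJ h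
    exact ⟨insert k J, show ∑ j ∈ insert k J, b j = _ by rw [Finset.sum_insert hkJ, add_comm]⟩

lemma exists_add_mem_IP_range_iff (I : Finset ℤ) (v M : ℤ) :
    ∃ t, M < t ∧ ∀ j ∈ I, (j + t ∈ IP (range b) ↔ j + v ∈ IP (range b)) := by
  set k := I.sup (fun j => (j + v).natAbs) + (M - v).toNat
  have hk := hsum k
  have hpre := Finset.sum_nonneg fun i (_ : i ∈ Finset.range k) => (hb i).le
  refine ⟨v + b k, by omega, fun j hj => ?_⟩
  rw [← add_assoc]
  refine add_mem_IP_range_iff hb hsum ?_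
  have := Finset.le_sup (f := fun j => (j + v).natAbs) hj
  rw [Int.abs_eq_natAbs]
  omega

end Superincreasing

section Subshift

def leftShift : (ℤ → Bool) ≃ₜ (ℤ → Bool) where
  toFun y j := y (j + 1)
  invFun y j := y (j - 1)
  left_inv y := by funext j; simp
  right_inv y := by funext j; simp
  continuous_toFun := by fun_prop
  continuous_invFun := by fun_prop

lemma leftShift_iterate_apply (n : ℕ) (y : ℤ → Bool) (j : ℤ) :
    (⇑leftShift)^[n] y j = y (j + n) := by
  induction n generalizing y with
  | zero => simp
  | succ n ih =>
    rw [iterate_succ_apply, ih]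
    show y (j + n + 1) = _
    push_cast
    ring_nf

open Classical in
noncomputable def shiftedIndicator (D : Set ℤ) (t : ℤ) : ℤ → Bool := fun j => decide (j + t ∈ D)

lemma shiftedIndicator_apply_eq_true {D : Set ℤ} {t j : ℤ} :
    shiftedIndicator D t j = true ↔ j + t ∈ D := by
  simp [shiftedIndicator]

lemma leftShift_iterate_shiftedIndicator (D : Set ℤ) (t : ℤ) (n : ℕ) :
    (⇑leftShift)^[n] (shiftedIndicator D t) = shiftedIndicator D (t + n) := by
  funext j
  rw [leftShift_iterate_apply]
  simp only [shiftedIndicator]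
  rw [add_assoc, add_comm (n : ℤ)]

lemma leftShift_shiftedIndicator (D : Set ℤ) (t : ℤ) :
    leftShift (shiftedIndicator D t) = shiftedIndicator D (t + 1) := by
  simpa using leftShift_iterate_shiftedIndicator D t 1

def orbitClosure (D : Set ℤ) : Set (ℤ → Bool) := closure (range (shiftedIndicator D))

lemma orbitClosure_eq_preimage_leftShift (D : Set ℤ) :
    orbitClosure D = leftShift ⁻¹' orbitClosure D := by
  rw [orbitClosure, Homeomorph.preimage_closure]
  congr 1
  ext y
  constructor
  · rintro ⟨t, rfl⟩
    exact ⟨t + 1, (leftShift_shiftedIndicator D t).symm⟩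
  · rintro ⟨t, ht⟩
    refine ⟨t - 1, leftShift.injective ?_⟩
    rwa [leftShift_shiftedIndicator, sub_add_cancel]

def orbitShift (D : Set ℤ) : orbitClosure D ≃ₜ orbitClosure D :=
  leftShift.sets (orbitClosure_eq_preimage_leftShift D)

lemma coe_orbitShift_iterate (D : Set ℤ) (n : ℕ) (y : orbitClosure D) :
    ((⇑(orbitShift D))^[n] y : ℤ → Bool) = (⇑leftShift)^[n] y :=
  (Semiconj.iterate_right (f := Subtype.val) (fun _ => rfl) n) y

lemma isOpen_setOf_apply_eq_true (j : ℤ) : IsOpen {z : ℤ → Bool | z j = true} :=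
  (isOpen_discrete {true}).preimage (continuous_apply (A := fun _ : ℤ => Bool) j)

lemma exists_cylinder_subset {D : Set ℤ} {P : Set (orbitClosure D)} (hP : IsOpen P)
    (hne : P.Nonempty) : ∃ (u : ℤ) (I : Finset ℤ), ∀ y : orbitClosure D,
      (∀ j ∈ I, (y : ℤ → Bool) j = shiftedIndicator D u j) → y ∈ P := by
  obtain ⟨P', hP', rfl⟩ := isOpen_induced_iff.1 hP
  obtain ⟨y, hy⟩ := hne
  obtain ⟨_, hu, u, rfl⟩ := mem_closure_iff.1 y.2 P' hP' hy
  obtain ⟨I, V, hV, hIV⟩ := isOpen_pi_iff.1 hP' _ hu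
  exact ⟨u, I, fun z hz => hIV fun j hj => hz j hj ▸ (hV j hj).2⟩

theorem topTrans_orbitShift {D : Set ℤ}
    (hD : ∀ (I : Finset ℤ) (v M : ℤ), ∃ t, M < t ∧ ∀ j ∈ I, (j + t ∈ D ↔ j + v ∈ D)) :
    TopTrans (orbitShift D) := by
  intro P Q hP hQ hPne hQne
  obtain ⟨u, I, hPI⟩ := exists_cylinder_subset hP hPne
  obtain ⟨v, I', hQI⟩ := exists_cylinder_subset hQ hQne
  obtain ⟨t, hut, ht⟩ := hD I' v u
  have hu : shiftedIndicator D u ∈ orbitClosure D := subset_closure (mem_range_self u)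
  refine ⟨t - u, by omega, ⟨_, hu⟩, hPI _ fun _ _ => rfl, hQI _ fun j hj => ?_⟩
  rw [coe_orbitShift_iterate, leftShift_iterate_shiftedIndicator,
    show u + ((t - u).toNat : ℤ) = t by omega]
  exact decide_eq_decide.2 (ht j hj)

lemma exists_mem_add_mem_of_mem_hitting {D : Set ℤ} {n : ℤ}
    (hn : n ∈ hitting (orbitShift D) {y | (y : ℤ → Bool) 0 = true}
      {y | (y : ℤ → Bool) 0 = true}) :
    ∃ t ∈ D, n + t ∈ D := by
  obtain ⟨hn, y, hy₀, hyn⟩ := hn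
  rw [mem_ofPred_eq, coe_orbitShift_iterate, leftShift_iterate_apply, zero_add,
    Int.toNat_of_nonneg hn.le] at hyn
  obtain ⟨_, ⟨h₀, hn'⟩, t, rfl⟩ := mem_closure_iff.1 y.2 _
    ((isOpen_setOf_apply_eq_true 0).inter (isOpen_setOf_apply_eq_true n)) ⟨hy₀, hyn⟩
  rw [mem_ofPred_eq, shiftedIndicator_apply_eq_true, zero_add] at h₀
  exact ⟨t, h₀, shiftedIndicator_apply_eq_true.1 hn'⟩

end Subshift

theorem mildMixing_of_forall_topTrans_prodCongr {X : Type*} [TopologicalSpace X] {T : X ≃ₜ X}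
    (h : ∀ (Y : Type) (_ : MetricSpace Y) (_ : CompactSpace Y) (S : Y ≃ₜ Y),
      TopTrans S → TopTrans (T.prodCongr S)) : MildMixing T := by
  rintro U V hU hV hUne hVne B - ⟨A, hApos, hAinf, hAB⟩
  obtain ⟨b, hb⟩ := exists_seq_mem_sum_add_lt (exists_gt_of_infinite hApos hAinf)
  choose hbA hsum using hb
  have hIP : IP (range b) ⊆ IP A := IP_mono (range_subset_iff.2 hbA)
  set D := IP (range b)
  -- this metric induces the subspace topology definitionally, so `orbitShift D` typechecks for it
  let _ := TopologicalSpace.metrizableSpaceMetric (orbitClosure D)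
  have : CompactSpace (orbitClosure D) := isCompact_iff_compactSpace.1 isClosed_closure.isCompact
  have hS := h _ _ ‹_› (orbitShift D)
    (topTrans_orbitShift (exists_add_mem_IP_range_iff (fun k => hApos (hbA k)) hsum))
  set C : Set (orbitClosure D) := {y | (y : ℤ → Bool) 0 = true}
  have hC : IsOpen C := (isOpen_setOf_apply_eq_true 0).preimage continuous_subtype_val
  have hCne : C.Nonempty := ⟨⟨_, subset_closure (mem_range_self 0)⟩,
    shiftedIndicator_apply_eq_true.2 (zero_mem_IP _)⟩
  obtain ⟨n, hnT, hnS⟩ := topTrans_prodCongr_iff.1 hS U V C C hU hV hC hC hUne hVne hCne hCne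
  obtain ⟨t, ht, hnt⟩ := exists_mem_add_mem_of_mem_hitting hnS
  exact ⟨n, hnT, hAB ⟨⟨n + t, hIP hnt, t, hIP ht, by ring⟩, hnS.1⟩⟩

theorem mildMixing_iff_prod_transitive_general {X : Type} [MetricSpace X]
    (T : X ≃ₜ X) :
    MildMixing T ↔
      ∀ (Y : Type) (_ : MetricSpace Y) (_ : CompactSpace Y) (S : Y ≃ₜ Y),
        TopTrans S → TopTrans (T.prodCongr S) :=
  ⟨fun hT _ _ _ _ hS => hT.topTrans_prodCongr hS, mildMixing_of_forall_topTrans_prodCongr⟩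

/-- a dynamical system `(X,T)` is mild mixing iff for every
topologically transitive dynamical system `(Y,S)` the product system
`(X × Y, T × S)` is topologically transitive. -/
theorem mildMixing_iff_prod_transitive {X : Type} [MetricSpace X] [CompactSpace X]
    (T : X ≃ₜ X) :
    MildMixing T ↔
      ∀ (Y : Type) (_ : MetricSpace Y) (_ : CompactSpace Y) (S : Y ≃ₜ Y),
        TopTrans S → TopTrans (T.prodCongr S) :=
  mildMixing_iff_prod_transitive_general T
end

section
/- If (X₁,T₁) and (X₂,T₂) are mild mixing dynamical systems, then the product system (X₁ × X₂, T₁ × T₂) is mild mixing. -/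
/-! helpers -/

lemma mem_SIP_of {A : Set ℤ} {P Q : Finset ℤ} (hP : ↑P ⊆ A) (hQ : ↑Q ⊆ A) :
    (∑ x ∈ P, x) - (∑ x ∈ Q, x) ∈ SIP A :=
  ⟨_, ⟨P, hP, rfl⟩, _, ⟨Q, hQ, rfl⟩, rfl⟩

lemma SIP_elim {A : Set ℤ} {d : ℤ} (hd : d ∈ SIP A) :
    ∃ P Q : Finset ℤ, ↑P ⊆ A ∧ ↑Q ⊆ A ∧ Disjoint P Q ∧
      d = (∑ x ∈ P, x) - (∑ x ∈ Q, x) := by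
  obtain ⟨s, ⟨F, hF, rfl⟩, t, ⟨G, hG, rfl⟩, rfl⟩ := hd
  refine ⟨F \ G, G \ F, ?_, ?_, disjoint_sdiff_sdiff, ?_⟩
  · exact (Finset.coe_subset.mpr (Finset.sdiff_subset)).trans hF
  · exact (Finset.coe_subset.mpr (Finset.sdiff_subset)).trans hG
  · have h1 := Finset.sum_sdiff (f := fun x : ℤ => x) (Finset.inter_subset_left (s₁ := F) (s₂ := G))
    have h2 := Finset.sum_sdiff (f := fun x : ℤ => x) (Finset.inter_subset_left (s₁ := G) (s₂ := F))
    rw [Finset.sdiff_inter_self_left] at h1 h2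
    have h3 : ∑ x ∈ F ∩ G, (fun x => x) x = ∑ x ∈ G ∩ F, (fun x => x) x := by rw [Finset.inter_comm]
    rw [← h1, ← h2, h3]
    ring

lemma exists_gt_of_infinite_pos {C : Set ℤ} (hCinf : C.Infinite)
    (hCpos : C ⊆ {n : ℤ | 0 < n}) (M : ℤ) : ∃ x ∈ C, M < x := by
  by_contra h
  push_neg at h
  apply hCinf
  apply Set.Finite.subset (Set.finite_Icc 1 M)
  intro x hx
  exact Set.mem_Icc.mpr ⟨hCpos hx, h x hx⟩

lemma exists_growth_seq {C : Set ℤ} (hCinf : C.Infinite)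
    (hCpos : C ⊆ {n : ℤ | 0 < n}) (M : ℤ) :
    ∃ c : ℕ → ℤ, (∀ n, c n ∈ C) ∧ (∀ n, 2 * c n < c (n + 1)) ∧ max M 0 < c 0 := by
  obtain ⟨c0, hc0C, hc0⟩ := exists_gt_of_infinite_pos hCinf hCpos (max M 0)
  choose f hfC hf using fun x : ℤ => exists_gt_of_infinite_pos hCinf hCpos (2 * x)
  refine ⟨fun n => Nat.rec c0 (fun _ p => f p) n, ?_, fun n => hf _, hc0⟩
  intro n
  induction n with
  | zero => exact hc0C
  | succ k ih => exact hfC _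

lemma thin {C : Set ℤ} (hCinf : C.Infinite) (hCpos : C ⊆ {n : ℤ | 0 < n}) (M : ℤ) :
    ∃ C' : Set ℤ, C' ⊆ C ∧ C'.Infinite ∧ ∀ d ∈ SIP C', 0 < d → M < d := by
  obtain ⟨c, hcC, hcgrow, hc0⟩ := exists_growth_seq hCinf hCpos M
  have hcpos : ∀ n, 0 < c n := fun n => hCpos (hcC n)
  have hmono : StrictMono c := by
    apply strictMono_nat_of_lt_succ
    intro n
    have := hcgrow n
    have := hcpos n
    omega
  have hbound : ∀ m, (∑ i ∈ Finset.range m, c i) + max M 0 < c m := by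
    intro m
    induction m with
    | zero => simpa using hc0
    | succ k ih =>
        rw [Finset.sum_range_succ]
        have := hcgrow k
        omega
  refine ⟨Set.range c, Set.range_subset_iff.mpr hcC, Set.infinite_range_of_injective hmono.injective, ?_⟩
  intro d hd hdpos
  obtain ⟨P, Q, hP, hQ, hPQ, rfl⟩ := SIP_elim hd
  have hne : (P ∪ Q).Nonempty := by
    rcases Finset.eq_empty_or_nonempty (P ∪ Q) with h | h
    · rw [Finset.union_eq_empty] at h
      simp [h.1, h.2] at hdpos
    · exact h
  set u := (P ∪ Q).max' hne with hu
  obtain ⟨m, hm⟩ : u ∈ Set.range c := by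
    have := (P ∪ Q).max'_mem hne
    rw [Finset.mem_union] at this
    rcases this with h | h
    · exact hP h
    · exact hQ h
  have hsub : (P ∪ Q).erase u ⊆ Finset.image c (Finset.range m) := by
    intro x hx
    have hxu : x ≠ u := Finset.ne_of_mem_erase hx
    have hxle : x ≤ u := Finset.le_max' _ _ (Finset.mem_of_mem_erase hx)
    have hxlt : x < u := lt_of_le_of_ne hxle hxu
    obtain ⟨i, hi⟩ : x ∈ Set.range c := by
      have := Finset.mem_of_mem_erase hx
      rw [Finset.mem_union] at this
      rcases this with h | h
      · exact hP h
      · exact hQ h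
    rw [Finset.mem_image]
    refine ⟨i, ?_, hi⟩
    rw [Finset.mem_range]
    have : c i < c m := by rw [hi, hm]; exact hxlt
    exact hmono.lt_iff_lt.mp this
  have hsum_small : ∀ R : Finset ℤ, R ⊆ (P ∪ Q).erase u →
      (∑ x ∈ R, x) ≤ ∑ i ∈ Finset.range m, c i := by
    intro R hR
    have h1 : (∑ x ∈ R, x) ≤ ∑ x ∈ Finset.image c (Finset.range m), x := by
      apply Finset.sum_le_sum_of_subset_of_nonneg (hR.trans hsub)
      intro x hx _
      rw [Finset.mem_image] at hx
      obtain ⟨i, _, rfl⟩ := hx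
      exact (hcpos i).le
    rw [Finset.sum_image (fun a _ b _ h => hmono.injective h)] at h1
    exact h1
  have hM0 : max M 0 < c m - ∑ i ∈ Finset.range m, c i := by
    have := hbound m; omega
  rcases Finset.mem_union.mp ((P ∪ Q).max'_mem hne) with huP | huQ
  · -- u ∈ P, so d ≥ u - σQ > M
    have hQu : Q ⊆ (P ∪ Q).erase u := by
      intro x hx
      refine Finset.mem_erase.mpr ⟨?_, Finset.mem_union_right _ hx⟩
      rintro rfl
      exact (Finset.disjoint_left.mp hPQ huP) hx
    have hQs := hsum_small Q hQu
    have hPs : u ≤ ∑ x ∈ P, x := by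
      have h4 : (∑ x ∈ P.erase u, x) + u = ∑ x ∈ P, x := Finset.sum_erase_add P (fun x : ℤ => x) huP
      have hnn : 0 ≤ ∑ x ∈ P.erase u, x := by
        apply Finset.sum_nonneg
        intro x hx
        obtain ⟨i, hi⟩ : x ∈ Set.range c := hP (Finset.mem_of_mem_erase hx)
        rw [← hi]; exact (hcpos i).le
      omega
    rw [hm] at hM0
    have : M ≤ max M 0 := le_max_left _ _
    omega
  · -- u ∈ Q : contradiction with positivity
    exfalso
    have hPu : P ⊆ (P ∪ Q).erase u := by
      intro x hx
      refine Finset.mem_erase.mpr ⟨?_, Finset.mem_union_left _ hx⟩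
      rintro rfl
      exact (Finset.disjoint_left.mp hPQ hx) huQ
    have hPs := hsum_small P hPu
    have hQs : u ≤ ∑ x ∈ Q, x := by
      have h4 : (∑ x ∈ Q.erase u, x) + u = ∑ x ∈ Q, x := Finset.sum_erase_add Q (fun x : ℤ => x) huQ
      have hnn : 0 ≤ ∑ x ∈ Q.erase u, x := by
        apply Finset.sum_nonneg
        intro x hx
        obtain ⟨i, hi⟩ : x ∈ Set.range c := hQ (Finset.mem_of_mem_erase hx)
        rw [← hi]; exact (hcpos i).le
      omega
    rw [hm] at hM0
    omega

lemma mm_hit {X : Type*} [TopologicalSpace X] {T : X ≃ₜ X} (hT : MildMixing T)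
    {U V : Set X} (hU : IsOpen U) (hV : IsOpen V) (hUne : U.Nonempty) (hVne : V.Nonempty)
    {C : Set ℤ} (hCpos : C ⊆ {n : ℤ | 0 < n}) (hCinf : C.Infinite) :
    ∃ (b : ℕ) (K L : Finset ℤ), 0 < b ∧ ↑K ⊆ C ∧ ↑L ⊆ C ∧ Disjoint K L ∧
      ((b : ℤ) = (∑ x ∈ K, x) - ∑ x ∈ L, x) ∧ (∃ x ∈ U, (⇑T)^[b] x ∈ V) := by
  obtain ⟨n, hnh, hnSIP, hnpos⟩ := hT U V hU hV hUne hVne (posPart (SIP C))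
    Set.inter_subset_right ⟨C, hCpos, hCinf, subset_rfl⟩
  obtain ⟨P, Q, hP, hQ, hPQ, hnd⟩ := SIP_elim hnSIP
  obtain ⟨hnpos', x, hxU, hxV⟩ := hnh
  refine ⟨n.toNat, P, Q, by omega, hP, hQ, hPQ, by rw [Int.toNat_of_nonneg hnpos'.le]; exact hnd,
    x, hxU, hxV⟩

structure MMState {X : Type*} [TopologicalSpace X] (T : X ≃ₜ X) (C : Set ℤ) where
  W : Set X
  C' : Set ℤ
  b : ℕ
  K : Finset ℤ
  L : Finset ℤ
  hW_open : IsOpen W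
  hW_ne : W.Nonempty
  hC'sub : C' ⊆ C
  hC'inf : C'.Infinite
  hKC : ↑K ⊆ C
  hLC : ↑L ⊆ C
  hKL : Disjoint K L
  hbKL : (b : ℤ) = (∑ x ∈ K, x) - ∑ x ∈ L, x
  hbpos : 0 < b
  hfresh : ∀ x, (x ∈ K ∨ x ∈ L) → x ∉ C'
  hbig : ∀ d ∈ SIP C', 0 < d → (b : ℤ) < d

def MMRel {X : Type*} [TopologicalSpace X] {T : X ≃ₜ X} {C : Set ℤ}
    (s t : MMState T C) : Prop :=
  t.W ⊆ s.W ∧ t.W ⊆ (fun x => (⇑T)^[t.b] x) ⁻¹' s.W ∧ t.C' ⊆ s.C' ∧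
    ↑t.K ⊆ s.C' ∧ ↑t.L ⊆ s.C' ∧ s.b < t.b

lemma mm_step {X : Type*} [TopologicalSpace X] {T : X ≃ₜ X} (hT : MildMixing T)
    {C : Set ℤ} (hCpos : C ⊆ {n : ℤ | 0 < n}) (s : MMState T C) :
    ∃ t : MMState T C, MMRel s t := by
  have hC'pos : s.C' ⊆ {n : ℤ | 0 < n} := s.hC'sub.trans hCpos
  obtain ⟨b, K, L, hbpos, hK, hL, hKL, hbKL, x, hxW, hxW'⟩ :=
    mm_hit hT s.hW_open s.hW_open s.hW_ne s.hW_ne hC'pos s.hC'inf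
  have hC'dinf : (s.C' \ (↑K ∪ ↑L)).Infinite :=
    s.hC'inf.diff ((K.finite_toSet).union (L.finite_toSet))
  obtain ⟨C'', hC''sub, hC''inf, hC''big⟩ :=
    thin hC'dinf ((Set.diff_subset).trans hC'pos) (b : ℤ)
  have hsbb : (s.b : ℤ) < (b : ℤ) := by
    have := s.hbig _ (mem_SIP_of hK hL) (by rw [← hbKL]; exact_mod_cast hbpos)
    rwa [← hbKL] at this
  refine ⟨⟨s.W ∩ (fun x => (⇑T)^[b] x) ⁻¹' s.W, C'', b, K, L,
      s.hW_open.inter (s.hW_open.preimage (T.continuous.iterate b)),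
      ⟨x, hxW, hxW'⟩,
      (hC''sub.trans Set.diff_subset).trans s.hC'sub,
      hC''inf, hK.trans s.hC'sub, hL.trans s.hC'sub, hKL, hbKL, hbpos, ?_, hC''big⟩,
    Set.inter_subset_left, Set.inter_subset_right,
    hC''sub.trans Set.diff_subset, hK, hL, by exact_mod_cast hsbb⟩
  intro y hy hyC''
  have := hC''sub hyC''
  rw [Set.mem_diff] at this
  apply this.2
  rcases hy with h | h
  · exact Set.mem_union_left _ h
  · exact Set.mem_union_right _ h

lemma mm_seq {X : Type*} [TopologicalSpace X] {T : X ≃ₜ X} (hT : MildMixing T)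
    {U V : Set X} (hU : IsOpen U) (hV : IsOpen V) (hUne : U.Nonempty) (hVne : V.Nonempty)
    {C : Set ℤ} (hCpos : C ⊆ {n : ℤ | 0 < n}) (hCinf : C.Infinite) :
    ∃ f : ℕ → MMState T C, (∀ n, MMRel (f n) (f (n + 1))) ∧ (f 0).W ⊆ U ∧
      (f 0).W ⊆ (fun x => (⇑T)^[(f 0).b] x) ⁻¹' V := by
  obtain ⟨b, K, L, hbpos, hK, hL, hKL, hbKL, x, hxU, hxV⟩ :=
    mm_hit hT hU hV hUne hVne hCpos hCinf
  have hCdinf : (C \ (↑K ∪ ↑L)).Infinite :=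
    hCinf.diff ((K.finite_toSet).union (L.finite_toSet))
  obtain ⟨C'', hC''sub, hC''inf, hC''big⟩ :=
    thin hCdinf ((Set.diff_subset).trans hCpos) (b : ℤ)
  have hfresh : ∀ y, (y ∈ K ∨ y ∈ L) → y ∉ C'' := by
    intro y hy hyC''
    have := hC''sub hyC''
    rw [Set.mem_diff] at this
    apply this.2
    rcases hy with h | h
    · exact Set.mem_union_left _ h
    · exact Set.mem_union_right _ h
  set s₀ : MMState T C := ⟨U ∩ (fun x => (⇑T)^[b] x) ⁻¹' V, C'', b, K, L,
    hU.inter (hV.preimage (T.continuous.iterate b)), ⟨x, hxU, hxV⟩,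
    hC''sub.trans Set.diff_subset, hC''inf, hK, hL, hKL, hbKL, hbpos, hfresh, hC''big⟩ with hs₀
  choose step hstep using fun s => mm_step hT hCpos s
  exact ⟨fun n => Nat.rec s₀ (fun _ s => step s) n, fun n => hstep _,
    Set.inter_subset_left, Set.inter_subset_right⟩

lemma mm_key {X : Type*} [TopologicalSpace X] {T : X ≃ₜ X} (hT : MildMixing T)
    {U V : Set X} (hU : IsOpen U) (hV : IsOpen V) (hUne : U.Nonempty) (hVne : V.Nonempty)
    {C : Set ℤ} (hCpos : C ⊆ {n : ℤ | 0 < n}) (hCinf : C.Infinite) :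
    ∃ (m : ℕ) (a : ℕ → ℕ), 0 < m ∧ StrictMono a ∧ (∀ i, 0 < a i) ∧
      ∀ I J : Finset ℕ, Disjoint I J →
        ((m : ℤ) + (∑ i ∈ I, (a i : ℤ)) - (∑ j ∈ J, (a j : ℤ)) ∈ SIP C) ∧
        (0 < (m : ℤ) + (∑ i ∈ I, (a i : ℤ)) - (∑ j ∈ J, (a j : ℤ)) →
          ∃ x ∈ U, (⇑T)^[((m : ℤ) + (∑ i ∈ I, (a i : ℤ)) - (∑ j ∈ J, (a j : ℤ))).toNat] x ∈ V) := by
  obtain ⟨f, hrel, hW0U, hW0V⟩ := mm_seq hT hU hV hUne hVne hCpos hCinf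
  set a : ℕ → ℕ := fun i => (f (i + 1)).b with ha
  -- chain facts
  have hWstep : ∀ k, (f (k + 1)).W ⊆ (f k).W := fun k => (hrel k).1
  have hWiter : ∀ k, ∀ y ∈ (f (k + 1)).W, (⇑T)^[a k] y ∈ (f k).W := fun k y hy => (hrel k).2.1 hy
  have hC'step : ∀ k, (f (k + 1)).C' ⊆ (f k).C' := fun k => (hrel k).2.2.1
  have hC'mono : ∀ i j, i ≤ j → (f j).C' ⊆ (f i).C' := by
    intro i j hij
    induction j, hij using Nat.le_induction with
    | base => exact subset_rfl
    | succ k hk ih => exact (hC'step k).trans ih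
  have haK : ∀ k, ↑(f (k + 1)).K ⊆ (f k).C' := fun k => (hrel k).2.2.2.1
  have haL : ∀ k, ↑(f (k + 1)).L ⊆ (f k).C' := fun k => (hrel k).2.2.2.2.1
  have hamono : StrictMono a := by
    apply strictMono_nat_of_lt_succ
    intro n
    exact (hrel (n + 1)).2.2.2.2.2
  have hapos : ∀ i, 0 < a i := fun i => (f (i + 1)).hbpos
  -- landing claim
  have land : ∀ k (I : Finset ℕ), (∀ i ∈ I, i < k) → ∀ y ∈ (f k).W,
      (⇑T)^[∑ i ∈ I, a i] y ∈ (f 0).W := by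
    intro k
    induction k with
    | zero =>
        intro I hI y hy
        have : I = ∅ := Finset.eq_empty_of_forall_notMem (fun i hi => Nat.not_lt_zero i (hI i hi))
        simpa [this] using hy
    | succ k ih =>
        intro I hI y hy
        by_cases hk : k ∈ I
        · have hsum : (∑ i ∈ I.erase k, a i) + a k = ∑ i ∈ I, a i :=
            Finset.sum_erase_add I a hk
          rw [← hsum, Function.iterate_add_apply]
          exact ih (I.erase k) (fun i hi => by
              have h1 := hI i (Finset.mem_of_mem_erase hi)
              have h2 := Finset.ne_of_mem_erase hi
              omega)
            _ (hWiter k y hy)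
        · exact ih I (fun i hi => by have := hI i hi; have : i ≠ k := fun h => hk (h ▸ hi); omega)
            y (hWstep k hy)
  -- SIP representation claim
  have sipRep : ∀ k (I J : Finset ℕ), (∀ i ∈ I, i < k) → (∀ j ∈ J, j < k) → Disjoint I J →
      ∃ P Q : Finset ℤ, ↑P ⊆ (f 0).C' ∧ ↑Q ⊆ (f 0).C' ∧
        (∀ x ∈ P, x ∉ (f k).C') ∧ (∀ x ∈ Q, x ∉ (f k).C') ∧
        (∑ i ∈ I, (a i : ℤ)) - (∑ j ∈ J, (a j : ℤ)) = (∑ x ∈ P, x) - (∑ x ∈ Q, x) := by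
    intro k
    induction k with
    | zero =>
        intro I J hI hJ _
        have hIe : I = ∅ := Finset.eq_empty_of_forall_notMem (fun i hi => Nat.not_lt_zero i (hI i hi))
        have hJe : J = ∅ := Finset.eq_empty_of_forall_notMem (fun j hj => Nat.not_lt_zero j (hJ j hj))
        exact ⟨∅, ∅, by simp, by simp, by simp, by simp, by simp [hIe, hJe]⟩
    | succ k ih =>
        intro I J hI hJ hIJ
        have hC'01 : (f (k + 1)).C' ⊆ (f k).C' := hC'step k
        by_cases hkI : k ∈ I
        · have hkJ : k ∉ J := fun h => (Finset.disjoint_left.mp hIJ hkI) h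
          obtain ⟨P, Q, hP0, hQ0, hPk, hQk, hsum⟩ := ih (I.erase k) J
            (fun i hi => by
              have h1 := hI i (Finset.mem_of_mem_erase hi)
              have h2 := Finset.ne_of_mem_erase hi
              omega)
            (fun j hj => by have := hJ j hj; have : j ≠ k := fun h => hkJ (h ▸ hj); omega)
            (Finset.disjoint_of_subset_left (Finset.erase_subset _ _) hIJ)
          have hdisjPK : Disjoint P (f (k + 1)).K :=
            Finset.disjoint_left.mpr (fun x hx hx' => hPk x hx (haK k hx'))
          have hdisjQL : Disjoint Q (f (k + 1)).L :=
            Finset.disjoint_left.mpr (fun x hx hx' => hQk x hx (haL k hx'))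
          refine ⟨P ∪ (f (k + 1)).K, Q ∪ (f (k + 1)).L, ?_, ?_, ?_, ?_, ?_⟩
          · rw [Finset.coe_union]
            exact Set.union_subset hP0 ((haK k).trans (hC'mono 0 k (Nat.zero_le k)))
          · rw [Finset.coe_union]
            exact Set.union_subset hQ0 ((haL k).trans (hC'mono 0 k (Nat.zero_le k)))
          · intro x hx
            rcases Finset.mem_union.mp hx with h | h
            · exact fun hc => hPk x h (hC'01 hc)
            · exact (f (k + 1)).hfresh x (Or.inl h)
          · intro x hx
            rcases Finset.mem_union.mp hx with h | h
            · exact fun hc => hQk x h (hC'01 hc)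
            · exact (f (k + 1)).hfresh x (Or.inr h)
          · rw [Finset.sum_union hdisjPK, Finset.sum_union hdisjQL]
            have h1 : (∑ i ∈ I, (a i : ℤ)) = (∑ i ∈ I.erase k, (a i : ℤ)) + (a k : ℤ) :=
              (Finset.sum_erase_add I _ hkI).symm
            have h2 : ((a k : ℕ) : ℤ) = (∑ x ∈ (f (k + 1)).K, x) - ∑ x ∈ (f (k + 1)).L, x :=
              (f (k + 1)).hbKL
            rw [h1, h2] at *
            omega
        · by_cases hkJ : k ∈ J
          · obtain ⟨P, Q, hP0, hQ0, hPk, hQk, hsum⟩ := ih I (J.erase k)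
              (fun i hi => by have := hI i hi; have : i ≠ k := fun h => hkI (h ▸ hi); omega)
              (fun j hj => by
                have h1 := hJ j (Finset.mem_of_mem_erase hj)
                have h2 := Finset.ne_of_mem_erase hj
                omega)
              (Finset.disjoint_of_subset_right (Finset.erase_subset _ _) hIJ)
            have hdisjPL : Disjoint P (f (k + 1)).L :=
              Finset.disjoint_left.mpr (fun x hx hx' => hPk x hx (haL k hx'))
            have hdisjQK : Disjoint Q (f (k + 1)).K :=
              Finset.disjoint_left.mpr (fun x hx hx' => hQk x hx (haK k hx'))
            refine ⟨P ∪ (f (k + 1)).L, Q ∪ (f (k + 1)).K, ?_, ?_, ?_, ?_, ?_⟩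
            · rw [Finset.coe_union]
              exact Set.union_subset hP0 ((haL k).trans (hC'mono 0 k (Nat.zero_le k)))
            · rw [Finset.coe_union]
              exact Set.union_subset hQ0 ((haK k).trans (hC'mono 0 k (Nat.zero_le k)))
            · intro x hx
              rcases Finset.mem_union.mp hx with h | h
              · exact fun hc => hPk x h (hC'01 hc)
              · exact (f (k + 1)).hfresh x (Or.inr h)
            · intro x hx
              rcases Finset.mem_union.mp hx with h | h
              · exact fun hc => hQk x h (hC'01 hc)
              · exact (f (k + 1)).hfresh x (Or.inl h)
            · rw [Finset.sum_union hdisjPL, Finset.sum_union hdisjQK]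
              have h1 : (∑ j ∈ J, (a j : ℤ)) = (∑ j ∈ J.erase k, (a j : ℤ)) + (a k : ℤ) :=
                (Finset.sum_erase_add J _ hkJ).symm
              have h2 : ((a k : ℕ) : ℤ) = (∑ x ∈ (f (k + 1)).K, x) - ∑ x ∈ (f (k + 1)).L, x :=
                (f (k + 1)).hbKL
              rw [h1, h2] at *
              omega
          · obtain ⟨P, Q, hP0, hQ0, hPk, hQk, hsum⟩ := ih I J
              (fun i hi => by have := hI i hi; have : i ≠ k := fun h => hkI (h ▸ hi); omega)
              (fun j hj => by have := hJ j hj; have : j ≠ k := fun h => hkJ (h ▸ hj); omega)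
              hIJ
            exact ⟨P, Q, hP0, hQ0, fun x hx hc => hPk x hx (hC'01 hc),
              fun x hx hc => hQk x hx (hC'01 hc), hsum⟩
  -- assemble
  refine ⟨(f 0).b, a, (f 0).hbpos, hamono, hapos, ?_⟩
  intro I J hIJ
  set k := (I ∪ J).sup Nat.succ with hk
  have hIk : ∀ i ∈ I, i < k := fun i hi =>
    Nat.lt_of_succ_le (Finset.le_sup (Finset.mem_union_left _ hi))
  have hJk : ∀ j ∈ J, j < k := fun j hj =>
    Nat.lt_of_succ_le (Finset.le_sup (Finset.mem_union_right _ hj))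
  obtain ⟨P, Q, hP0, hQ0, hPk, hQk, hsum⟩ := sipRep k I J hIk hJk hIJ
  constructor
  · -- SIP membership
    have hdisjKP : Disjoint (f 0).K P :=
      Finset.disjoint_left.mpr (fun x hx hx' => (f 0).hfresh x (Or.inl hx) (hP0 hx'))
    have hdisjLQ : Disjoint (f 0).L Q :=
      Finset.disjoint_left.mpr (fun x hx hx' => (f 0).hfresh x (Or.inr hx) (hQ0 hx'))
    have hmem := mem_SIP_of (A := C)
      (P := (f 0).K ∪ P) (Q := (f 0).L ∪ Q)
      (by rw [Finset.coe_union]; exact Set.union_subset (f 0).hKC (hP0.trans (f 0).hC'sub))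
      (by rw [Finset.coe_union]; exact Set.union_subset (f 0).hLC (hQ0.trans (f 0).hC'sub))
    have heq : ((f 0).b : ℤ) + (∑ i ∈ I, (a i : ℤ)) - (∑ j ∈ J, (a j : ℤ)) =
        (∑ x ∈ (f 0).K ∪ P, x) - ∑ x ∈ (f 0).L ∪ Q, x := by
      rw [Finset.sum_union hdisjKP, Finset.sum_union hdisjLQ]
      have h2 := (f 0).hbKL
      omega
    rw [heq]
    exact hmem
  · -- hitting
    intro hpos
    obtain ⟨y, hy⟩ := (f k).hW_ne
    set nInt := ((f 0).b : ℤ) + (∑ i ∈ I, (a i : ℤ)) - (∑ j ∈ J, (a j : ℤ)) with hnInt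
    have hIsum : (∑ i ∈ I, (a i : ℤ)) = ((∑ i ∈ I, a i : ℕ) : ℤ) := by push_cast; ring
    have hJsum : (∑ j ∈ J, (a j : ℤ)) = ((∑ j ∈ J, a j : ℕ) : ℤ) := by push_cast; ring
    have hnat : nInt.toNat + (∑ j ∈ J, a j) = (f 0).b + ∑ i ∈ I, a i := by
      have h1 : (0:ℤ) < nInt := hpos
      rw [hnInt, hIsum, hJsum] at h1 ⊢
      omega
    refine ⟨(⇑T)^[∑ j ∈ J, a j] y, hW0U (land k J hJk y hy), ?_⟩
    rw [← Function.iterate_add_apply, hnat, show (f 0).b + ∑ i ∈ I, a i = (f 0).b + ∑ i ∈ I, a i from rfl,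
      Function.iterate_add_apply]
    exact hW0V (land k I hIk y hy)

lemma prodCongr_iterate {X₁ X₂ : Type*} [TopologicalSpace X₁] [TopologicalSpace X₂]
    (T₁ : X₁ ≃ₜ X₁) (T₂ : X₂ ≃ₜ X₂) (n : ℕ) (p : X₁ × X₂) :
    (⇑(T₁.prodCongr T₂))^[n] p = ((⇑T₁)^[n] p.1, (⇑T₂)^[n] p.2) := by
  induction n with
  | zero => rfl
  | succ k ih => rw [Function.iterate_succ_apply', Function.iterate_succ_apply',
      Function.iterate_succ_apply', ih]; rfl

lemma SIP_range_elim {g : ℕ → ℤ} (hg : Function.Injective g) {s : ℤ}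
    (hs : s ∈ SIP (Set.range g)) :
    ∃ I J : Finset ℕ, Disjoint I J ∧ s = (∑ i ∈ I, g i) - ∑ j ∈ J, g j := by
  classical
  obtain ⟨P, Q, hP, hQ, hPQ, rfl⟩ := SIP_elim hs
  have hinj : Set.InjOn g (g ⁻¹' ↑P) := hg.injOn
  have hinj' : Set.InjOn g (g ⁻¹' ↑Q) := hg.injOn
  refine ⟨P.preimage g hinj, Q.preimage g hinj', ?_, ?_⟩
  · rw [Finset.disjoint_left]
    intro i hi hi'
    rw [Finset.mem_preimage] at hi hi'
    exact Finset.disjoint_left.mp hPQ hi hi'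
  · have h1 : (P.preimage g hinj).image g = P := by
      rw [Finset.image_preimage, Finset.filter_true_of_mem]
      intro x hx
      exact hP hx
    have h2 : (Q.preimage g hinj').image g = Q := by
      rw [Finset.image_preimage, Finset.filter_true_of_mem]
      intro x hx
      exact hQ hx
    have e1 : (∑ x ∈ P, x) = ∑ i ∈ P.preimage g hinj, g i := by
      conv_lhs => rw [← h1]
      rw [Finset.sum_image (fun a _ b _ h => hg h)]
    have e2 : (∑ x ∈ Q, x) = ∑ j ∈ Q.preimage g hinj', g j := by
      conv_lhs => rw [← h2]
      rw [Finset.sum_image (fun a _ b _ h => hg h)]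
    rw [e1, e2]


/-- the product of two mild mixing dynamical systems is mild
mixing. -/
theorem mildMixing_prod {X₁ X₂ : Type*} [MetricSpace X₁] [CompactSpace X₁]
    [MetricSpace X₂] [CompactSpace X₂]
    (T₁ : X₁ ≃ₜ X₁) (T₂ : X₂ ≃ₜ X₂)
    (h₁ : MildMixing T₁) (h₂ : MildMixing T₂) :
    MildMixing (T₁.prodCongr T₂) := by
  intro U V hUopen hVopen hUne hVne Atgt hAtgtpos hAtgtSIP
  obtain ⟨C, hCpos, hCinf, hCsub⟩ := hAtgtSIP
  obtain ⟨⟨u₁, u₂⟩, hu⟩ := hUne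
  obtain ⟨U₁, U₂, hU₁, hU₂, hu₁, hu₂, hUsub⟩ := isOpen_prod_iff.mp hUopen u₁ u₂ hu
  obtain ⟨⟨v₁, v₂⟩, hv⟩ := hVne
  obtain ⟨V₁, V₂, hV₁, hV₂, hv₁, hv₂, hVsub⟩ := isOpen_prod_iff.mp hVopen v₁ v₂ hv
  obtain ⟨m, a, hmpos, hamono, hapos, hkey⟩ :=
    mm_key h₁ hU₁ hV₁ ⟨u₁, hu₁⟩ ⟨v₁, hv₁⟩ hCpos hCinf
  set g : ℕ → ℤ := fun i => (a i : ℤ) with hg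
  have hginj : Function.Injective g := fun i j h => by
    apply hamono.injective
    simp only [hg] at h
    exact_mod_cast h
  have hA''pos : Set.range g ⊆ {n : ℤ | 0 < n} := by
    rintro _ ⟨i, rfl⟩
    simp only [hg, Set.mem_setOf_eq]
    exact_mod_cast hapos i
  have hA''inf : (Set.range g).Infinite := Set.infinite_range_of_injective hginj
  -- apply h₂ to U₂ and T₂^{-m} V₂
  set V₂' : Set X₂ := (⇑T₂)^[m] ⁻¹' V₂ with hV₂'
  have hV₂'open : IsOpen V₂' := hV₂.preimage (T₂.continuous.iterate m)
  have hV₂'ne : V₂'.Nonempty := by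
    refine ⟨(⇑T₂.symm)^[m] v₂, ?_⟩
    have hLI : Function.LeftInverse ⇑T₂ ⇑T₂.symm := fun x => T₂.apply_symm_apply x
    simp only [hV₂', Set.mem_preimage]
    rw [(hLI.iterate m) v₂]
    exact hv₂
  obtain ⟨sVal, hshit, hsSIP, hspos⟩ := h₂ U₂ V₂' hU₂ hV₂'open ⟨u₂, hu₂⟩ hV₂'ne
    (posPart (SIP (Set.range g))) Set.inter_subset_right
    ⟨Set.range g, hA''pos, hA''inf, subset_rfl⟩
  obtain ⟨I, J, hIJ, hsval⟩ := SIP_range_elim hginj hsSIP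
  obtain ⟨hSIPC, hhit⟩ := hkey I J hIJ
  set nInt : ℤ := (m : ℤ) + (∑ i ∈ I, g i) - ∑ j ∈ J, g j with hnInt
  have hnval : nInt = (m : ℤ) + sVal := by rw [hnInt, hsval]; ring
  have hnpos : 0 < nInt := by
    have h0 : (0 : ℤ) < sVal := hspos
    have h1 : (0 : ℤ) < m := by exact_mod_cast hmpos
    rw [hnval]
    omega
  obtain ⟨x₁, hx₁U, hx₁V⟩ := hhit hnpos
  obtain ⟨hspos', x₂, hx₂U, hx₂V⟩ := hshit
  have hnnat : nInt.toNat = m + sVal.toNat := by omega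
  refine ⟨nInt, ⟨hnpos, (x₁, x₂), hUsub ⟨hx₁U, hx₂U⟩, ?_⟩, hCsub ⟨hSIPC, hnpos⟩⟩
  rw [prodCongr_iterate]
  apply hVsub
  constructor
  · exact hx₁V
  · show (⇑T₂)^[nInt.toNat] x₂ ∈ V₂
    rw [hnnat, Function.iterate_add_apply]
    exact hx₂V
end

section
/- Let k : ℕ → ℕ be strictly increasing and let N ∈ ℕ. Then there exists a strictly increasing function k₁ : ℕ → ℕ such that IP(k₁(ℕ)) ⊆ IP(k(ℕ)) (k₁ refines k) and 3^N divides k₁(n) for every n ∈ ℕ (equivalently, k₁(n) ≻ 3^{N−1} for all n). -/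
lemma sum_blocks_mem_IP (A : Set ℤ) (T : Finset ℕ) (G : ℕ → Finset ℤ)
    (hG : ∀ n, ↑(G n) ⊆ A)
    (hdisj : ∀ a ∈ T, ∀ b ∈ T, a ≠ b → Disjoint (G a) (G b)) :
    (∑ n ∈ T, ∑ x ∈ G n, x) ∈ IP A := by
  refine ⟨T.biUnion G, ?_, ?_⟩
  · intro x hx
    simp only [Finset.coe_biUnion, Set.mem_iUnion] at hx
    obtain ⟨n, _, hxn⟩ := hx
    exact hG n hxn
  · exact (Finset.sum_biUnion hdisj).symm

/-- if `k : ℕ → ℕ` is a +function (strictly increasing, with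
positive values) and `N ∈ ℕ = {1,2,...}`, then there is a +function `k₁`
refining `k` (i.e. `IP(k₁(ℕ)) ⊆ IP(k(ℕ))`) such that `3^N` divides `k₁(n)` for
every `n` (equivalently, `k₁(n) ≻ 3^{N-1}` for all `n`). -/
theorem exists_refinement_divisible (k : ℕ → ℕ) (hk : StrictMono k)
    (hkpos : ∀ n, 0 < k n) (N : ℕ) (hN : 1 ≤ N) :
    ∃ k₁ : ℕ → ℕ, StrictMono k₁ ∧ (∀ n, 0 < k₁ n) ∧
      IP (Set.range fun n => (k₁ n : ℤ)) ⊆ IP (Set.range fun n => (k n : ℤ)) ∧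
      ∀ n, 3 ^ N ∣ k₁ n := by
  haveI : NeZero (3 ^ N) := ⟨pow_ne_zero _ (by norm_num)⟩
  set s : ℕ → ℕ := fun m => ∑ i ∈ Finset.range m, k i with hs
  have hsle : ∀ m, m ≤ s m := by
    intro m
    calc m = ∑ _i ∈ Finset.range m, 1 := by simp
    _ ≤ s m := Finset.sum_le_sum fun i _ => hkpos i
  -- pigeonhole: infinitely many m with the same residue of s m mod 3^N
  obtain ⟨c, hc⟩ := Finite.exists_infinite_fiber (fun m => ((s m : ZMod (3 ^ N))))
  have hSinf : {m : ℕ | (s m : ZMod (3 ^ N)) = c}.Infinite := by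
    rw [← Set.infinite_coe_iff]
    exact hc
  -- recursively pick indices in this set, growing fast
  have hstep : ∀ b : ℕ, ∃ x, (s x : ZMod (3 ^ N)) = c ∧ b < x := by
    intro b
    obtain ⟨x, hx1, hx2⟩ := hSinf.exists_gt b
    exact ⟨x, hx1, hx2⟩
  choose g hg1 hg2 using hstep
  set m : ℕ → ℕ := fun j => Nat.rec (g 0) (fun _ mj => g (s mj + 1)) j with hm
  have hmS : ∀ j, (s (m j) : ZMod (3 ^ N)) = c := by
    intro j; cases j with
    | zero => exact hg1 0
    | succ j => exact hg1 _
  have hmgrow : ∀ j, s (m j) + 1 < m (j + 1) := fun j => hg2 _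
  have hmmono : StrictMono m := by
    apply strictMono_nat_of_lt_succ
    intro j
    have := hmgrow j
    have := hsle (m j)
    omega
  set k₁ : ℕ → ℕ := fun n => ∑ i ∈ Finset.Ico (m n) (m (n + 1)), k i with hk₁
  have hmlt : ∀ n, m n < m (n + 1) := fun n => hmmono (Nat.lt_succ_self n)
  have hsum : ∀ n, s (m n) + k₁ n = s (m (n + 1)) := by
    intro n
    exact Finset.sum_range_add_sum_Ico k (hmlt n).le
  have hdvd : ∀ n, 3 ^ N ∣ k₁ n := by
    intro n
    have h1 : (s (m n) : ZMod (3 ^ N)) = (s (m (n + 1)) : ZMod (3 ^ N)) := by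
      rw [hmS n, hmS (n + 1)]
    have h2 : s (m n) ≡ s (m (n + 1)) [MOD 3 ^ N] :=
      (ZMod.natCast_eq_natCast_iff _ _ _).mp h1
    have h3 : 3 ^ N ∣ s (m (n + 1)) - s (m n) := by
      refine (Nat.modEq_iff_dvd' ?_).mp h2
      exact Nat.le.intro (hsum n)
    have h4 : s (m (n + 1)) - s (m n) = k₁ n := by
      have := hsum n; omega
    rwa [h4] at h3
  have hpos : ∀ n, 0 < k₁ n := by
    intro n
    have := hsum n
    have h1 : s (m n) < s (m (n + 1)) := by
      have h2 := hmgrow n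
      have h3 := hsle (m (n + 1))
      omega
    omega
  have hk₁mono : StrictMono k₁ := by
    apply strictMono_nat_of_lt_succ
    intro n
    have hub : k₁ n ≤ s (m (n + 1)) := by have := hsum n; omega
    have hlt2 : m (n + 1) < m (n + 2) := hmlt (n + 1)
    have hmem : m (n + 2) - 1 ∈ Finset.Ico (m (n + 1)) (m (n + 2)) := by
      simp only [Finset.mem_Ico]; omega
    have hlb : k (m (n + 2) - 1) ≤ k₁ (n + 1) :=
      Finset.single_le_sum (fun i _ => Nat.zero_le (k i)) hmem
    have hkge : m (n + 2) - 1 ≤ k (m (n + 2) - 1) := hk.le_apply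
    have hgrow : s (m (n + 1)) + 1 < m (n + 2) := hmgrow (n + 1)
    omega
  refine ⟨k₁, hk₁mono, hpos, ?_, hdvd⟩
  -- refinement
  intro t ht
  obtain ⟨F, hF, rfl⟩ := ht
  have hinj : Function.Injective (fun n => (k₁ n : ℤ)) := by
    intro a b hab
    exact hk₁mono.injective (Nat.cast_injective hab)
  set T : Finset ℕ := F.preimage (fun n => (k₁ n : ℤ)) hinj.injOn with hT
  have hFim : ∑ x ∈ F, x = ∑ n ∈ T, (k₁ n : ℤ) := by
    have h := Finset.sum_preimage (fun n => (k₁ n : ℤ)) F hinj.injOn id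
      (fun x hx hxr => absurd (hF hx) hxr)
    simpa [hT] using h.symm
  set G : ℕ → Finset ℤ := fun n => (Finset.Ico (m n) (m (n + 1))).image (fun i => (k i : ℤ))
    with hG
  have hkinj : Function.Injective (fun i => (k i : ℤ)) := by
    intro a b hab
    exact hk.injective (Nat.cast_injective hab)
  have hval : ∀ n, (k₁ n : ℤ) = ∑ x ∈ G n, x := by
    intro n
    rw [hG]
    rw [Finset.sum_image (fun a _ b _ h => hkinj h)]
    simp [hk₁, Nat.cast_sum]
  rw [hFim]
  rw [Finset.sum_congr rfl fun n _ => hval n]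
  apply sum_blocks_mem_IP
  · intro n x hx
    simp only [hG, Finset.coe_image, Set.mem_image] at hx
    obtain ⟨i, _, rfl⟩ := hx
    exact ⟨i, rfl⟩
  · intro a _ b _ hab
    rw [hG, Finset.disjoint_image hkinj]
    rw [Finset.disjoint_left]
    intro x hx1 hx2
    simp only [Finset.mem_Ico] at hx1 hx2
    rcases hab.lt_or_gt with h | h
    · have : m (a + 1) ≤ m b := hmmono.monotone h
      omega
    · have : m (b + 1) ≤ m a := hmmono.monotone h
      omega
end

section
/- Let A ⊆ ℕ be a translate of an SIP set, i.e. there exist u ∈ ℤ and an infinite B ⊆ ℕ with (u + SIP(B))_+ ⊆ A. Then for every odd positive integer K, the map t ↦ z(t) mod K is surjective from A onto ℤ/Kℤ; that is, for every residue c modulo K there exists t ∈ A with z(t) ≡ c (mod K). -/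
/-- The `n`-th digit (0-indexed: `btDigit n t = ε_{n+1}(t)`) of the balanced
ternary expansion `t = Σ_{n ∈ ℕ} ε_n(t)·3^{n-1}`, with digits in `{-1,0,1}`. -/
def btDigit : ℕ → ℤ → ℤ
  | 0, t => (t + 1) % 3 - 1
  | n + 1, t => btDigit n ((t - ((t + 1) % 3 - 1)) / 3)

/-- The set of indices (0-indexed) of the nonzero balanced ternary digits of `t`. -/
def btIndices (t : ℤ) : Set ℕ := {n | btDigit n t ≠ 0}

/-- The last index `j_{r(t)}(t)` of `t` (junk value for `t = 0`). -/
noncomputable def jmax (t : ℤ) : ℕ := sSup (btIndices t)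

/-- The successor of the index `i` in the list of indices of `t`: the least
index of `t` that is larger than `i`. -/
noncomputable def nextIdx (t : ℤ) (i : ℕ) : ℕ := sInf {j ∈ btIndices t | i < j}

/-- The sign change count `z(t)`: the number of consecutive pairs
`j_i(t) < j_{i+1}(t)` of indices of `t` whose digits differ. -/
noncomputable def signChanges (t : ℤ) : ℕ :=
  {i ∈ btIndices t | i < jmax t ∧ btDigit i t ≠ btDigit (nextIdx t i) t}.ncard

/-!
If the balanced ternary digits of `t` all lie below position `L`, then the digit string of
`t + 3 ^ L * m` is that of `t` followed by that of `m`. So `z` is additive under this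
concatenation, except for one extra sign change when the leading digit of `t` differs from the
lowest nonzero digit of `m`.

Because `B` is infinite, for every `L` it contains `x ≠ y` with `x ≡ y (mod 3 ^ L)`, and
`x - y = 3 ^ L * m` is such a block. Only finitely many triples
`(z(m) mod K, lowest digit of m, leading digit of m)` are possible, so by pigeonhole one triple
occurs at arbitrarily large `L` with `x, y` outside any given finite set. Start from a nonzero
element of `u + SIP(B)` and append `2K` such blocks, using fresh `x, y` each time. The sign of
each block is ours to choose, and it decides whether the junction adds a sign change. This adds
`2K·z(m) ≡ 0` plus `d` changes, where we may pick any `d ≤ 2K`. Since `K` is odd, `d` can be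
given any residue mod `K` and any parity. The parity fixes the leading digit, so we can make it
`1`, and then the result is positive.
-/

def btShift (t : ℤ) : ℤ := (t - ((t + 1) % 3 - 1)) / 3

theorem btDigit_succ (n : ℕ) (t : ℤ) : btDigit (n + 1) t = btDigit n (btShift t) := rfl

theorem btDigit_zero (t : ℤ) : btDigit 0 t = (t + 1) % 3 - 1 := rfl

theorem btShift_eq (t : ℤ) : btShift t = (t + 1) / 3 := by
  unfold btShift; omega

theorem three_mul_btShift_add_btDigit_zero (t : ℤ) : 3 * btShift t + btDigit 0 t = t := by
  rw [btShift_eq, btDigit_zero]; omega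

theorem btShift_add_three_mul (t M : ℤ) : btShift (t + 3 * M) = btShift t + M := by
  simp only [btShift_eq]; omega

theorem btShift_neg (t : ℤ) : btShift (-t) = -btShift t := by
  simp only [btShift_eq]; omega

theorem natAbs_btShift_lt {t : ℤ} (ht : t ≠ 0) : (btShift t).natAbs < t.natAbs := by
  rw [btShift_eq]; omega

theorem btDigit_mem_Icc (n : ℕ) (t : ℤ) : btDigit n t ∈ Set.Icc (-1 : ℤ) 1 := by
  induction n generalizing t with
  | zero => rw [btDigit_zero]; constructor <;> omega
  | succ n ih => exact ih _

theorem btDigit_int_zero (n : ℕ) : btDigit n 0 = 0 := by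
  induction n with
  | zero => rfl
  | succ n ih => rwa [btDigit_succ, show btShift 0 = 0 by decide]

theorem btDigit_neg (n : ℕ) (t : ℤ) : btDigit n (-t) = -btDigit n t := by
  induction n generalizing t with
  | zero => simp only [btDigit_zero]; omega
  | succ n ih => rw [btDigit_succ, btDigit_succ, btShift_neg, ih]

theorem eq_zero_of_forall_btDigit_eq_zero {t : ℤ} (h : ∀ n, btDigit n t = 0) : t = 0 := by
  induction hk : t.natAbs using Nat.strong_induction_on generalizing t with
  | _ k ih =>
    by_contra ht
    have hs : btShift t = 0 := ih _ (hk ▸ natAbs_btShift_lt ht) (fun n => h (n + 1)) rfl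
    have := three_mul_btShift_add_btDigit_zero t
    rw [hs, h 0] at this
    omega

theorem exists_forall_le_btDigit_eq_zero (t : ℤ) : ∃ N, ∀ n, N ≤ n → btDigit n t = 0 := by
  induction hk : t.natAbs using Nat.strong_induction_on generalizing t with
  | _ k ih =>
    by_cases ht : t = 0
    · exact ⟨0, fun n _ => ht ▸ btDigit_int_zero n⟩
    obtain ⟨N, hN⟩ := ih _ (hk ▸ natAbs_btShift_lt ht) (btShift t) rfl
    refine ⟨N + 1, fun n hn => ?_⟩
    obtain ⟨n, rfl⟩ : ∃ m, n = m + 1 := ⟨n - 1, by omega⟩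
    exact hN n (by omega)

theorem pos_of_btDigit_eq_one {t : ℤ} {P : ℕ} (hP : btDigit P t = 1)
    (h : ∀ n, P < n → btDigit n t = 0) : 0 < t := by
  induction P generalizing t with
  | zero =>
    have hs : btShift t = 0 :=
      eq_zero_of_forall_btDigit_eq_zero fun n => h (n + 1) n.succ_pos
    have := three_mul_btShift_add_btDigit_zero t
    rw [hs, hP] at this
    omega
  | succ P ih =>
    have hs : 0 < btShift t := ih hP fun n hn => h (n + 1) (by omega)
    rw [btShift_eq] at hs
    omega

theorem btDigit_add_three_pow_mul_of_lt {n N : ℕ} (h : n < N) (t M : ℤ) :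
    btDigit n (t + 3 ^ N * M) = btDigit n t := by
  obtain ⟨N, rfl⟩ := Nat.exists_eq_add_of_lt h
  clear h
  induction n generalizing t N with
  | zero => rw [pow_succ', mul_assoc, btDigit_zero, btDigit_zero]; omega
  | succ n ih =>
    rw [show n + 1 + N + 1 = n + N + 1 + 1 by omega, pow_succ', mul_assoc, btDigit_succ,
      btDigit_succ, btShift_add_three_mul]
    exact ih _ N

theorem btDigit_add_three_pow_mul {N : ℕ} {t : ℤ} (ht : ∀ n, N ≤ n → btDigit n t = 0)
    (M : ℤ) (k : ℕ) : btDigit (N + k) (t + 3 ^ N * M) = btDigit k M := by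
  induction N generalizing t with
  | zero => simp [eq_zero_of_forall_btDigit_eq_zero fun n => ht n n.zero_le]
  | succ N ih =>
    rw [pow_succ', mul_assoc, Nat.add_right_comm, btDigit_succ, btShift_add_three_mul]
    exact ih (fun n hn => ht (n + 1) (by omega))

theorem ne_zero_of_mem_btIndices {t : ℤ} {n : ℕ} (hn : n ∈ btIndices t) : t ≠ 0 := by
  rintro rfl
  exact hn (btDigit_int_zero n)

theorem exists_forall_mem_btIndices_lt (t : ℤ) : ∃ N, ∀ n ∈ btIndices t, n < N := by
  obtain ⟨N, hN⟩ := exists_forall_le_btDigit_eq_zero t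
  exact ⟨N, fun n hn => not_le.1 fun h => hn (hN n h)⟩

theorem btIndices_finite (t : ℤ) : (btIndices t).Finite := by
  obtain ⟨N, hN⟩ := exists_forall_mem_btIndices_lt t
  exact (Set.finite_Iio N).subset hN

theorem btIndices_nonempty {t : ℤ} (ht : t ≠ 0) : (btIndices t).Nonempty := by
  by_contra h
  exact ht (eq_zero_of_forall_btDigit_eq_zero fun n => not_not.1 fun hn => h ⟨n, hn⟩)

theorem btIndices_neg (t : ℤ) : btIndices (-t) = btIndices t := by
  ext n
  simp [btIndices, btDigit_neg]

theorem jmax_mem {t : ℤ} (ht : t ≠ 0) : jmax t ∈ btIndices t :=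
  Nat.sSup_mem (btIndices_nonempty ht) (btIndices_finite t).bddAbove

theorem le_jmax {t : ℤ} {n : ℕ} (hn : n ∈ btIndices t) : n ≤ jmax t :=
  le_csSup (btIndices_finite t).bddAbove hn

theorem jmax_neg (t : ℤ) : jmax (-t) = jmax t := by
  rw [jmax, jmax, btIndices_neg]

theorem isLeast_nextIdx {t : ℤ} {i : ℕ} (ht : t ≠ 0) (hi : i < jmax t) :
    IsLeast {j ∈ btIndices t | i < j} (nextIdx t i) :=
  ⟨Nat.sInf_mem ⟨jmax t, jmax_mem ht, hi⟩, fun _ hj => Nat.sInf_le hj⟩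

theorem nextIdx_neg (t : ℤ) (i : ℕ) : nextIdx (-t) i = nextIdx t i := by
  rw [nextIdx, nextIdx, btIndices_neg]

noncomputable def leadingDigit (t : ℤ) : ℤ := btDigit (jmax t) t

noncomputable def trailingDigit (t : ℤ) : ℤ := btDigit (sInf (btIndices t)) t

theorem isUnit_of_mem_btIndices {t : ℤ} {n : ℕ} (hn : n ∈ btIndices t) :
    IsUnit (btDigit n t) := by
  have hn : btDigit n t ≠ 0 := hn
  have := btDigit_mem_Icc n t
  exact Int.isUnit_iff.2 (by simp only [Set.mem_Icc] at this; omega)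

theorem isUnit_leadingDigit {t : ℤ} (ht : t ≠ 0) : IsUnit (leadingDigit t) :=
  isUnit_of_mem_btIndices (jmax_mem ht)

theorem isUnit_trailingDigit {t : ℤ} (ht : t ≠ 0) : IsUnit (trailingDigit t) :=
  isUnit_of_mem_btIndices (Nat.sInf_mem (btIndices_nonempty ht))

theorem pos_of_leadingDigit_eq_one {t : ℤ} (h : leadingDigit t = 1) : 0 < t :=
  pos_of_btDigit_eq_one h fun _ hn =>
    not_not.1 fun hd => (le_jmax hd).not_gt hn

def signChangeSet (t : ℤ) : Set ℕ :=
  {i ∈ btIndices t | i < jmax t ∧ btDigit i t ≠ btDigit (nextIdx t i) t}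

theorem signChanges_eq_ncard (t : ℤ) : signChanges t = (signChangeSet t).ncard := rfl

theorem signChangeSet_subset_btIndices (t : ℤ) : signChangeSet t ⊆ btIndices t :=
  fun _ hi => hi.1

theorem signChangeSet_neg (t : ℤ) : signChangeSet (-t) = signChangeSet t := by
  ext i
  simp only [signChangeSet, btIndices_neg, jmax_neg, nextIdx_neg, btDigit_neg,
    ne_eq, neg_inj]

theorem signChanges_units_mul (ε : ℤˣ) (t : ℤ) : signChanges (ε * t) = signChanges t := by
  rcases Int.units_eq_one_or ε with rfl | rfl <;>
    simp [signChanges_eq_ncard, signChangeSet_neg]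

theorem leadingDigit_units_mul (ε : ℤˣ) (t : ℤ) : leadingDigit (ε * t) = ε * leadingDigit t := by
  rcases Int.units_eq_one_or ε with rfl | rfl <;> simp [leadingDigit, jmax_neg, btDigit_neg]

theorem trailingDigit_units_mul (ε : ℤˣ) (t : ℤ) :
    trailingDigit (ε * t) = ε * trailingDigit t := by
  rcases Int.units_eq_one_or ε with rfl | rfl <;>
    simp [trailingDigit, btIndices_neg, btDigit_neg]

section Concatenation

variable {t M : ℤ} {N : ℕ}

theorem btDigit_eq_zero_of_le (hN : ∀ n ∈ btIndices t, n < N) {n : ℕ} (hn : N ≤ n) :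
    btDigit n t = 0 :=
  not_not.1 fun h => (hN n h).not_ge hn

theorem mem_btIndices_add_three_pow_mul_of_lt {i : ℕ} (hi : i < N) :
    i ∈ btIndices (t + 3 ^ N * M) ↔ i ∈ btIndices t := by
  simp only [btIndices, Set.mem_ofPred_eq, btDigit_add_three_pow_mul_of_lt hi]

theorem add_mem_btIndices_add_three_pow_mul (hN : ∀ n ∈ btIndices t, n < N) (k : ℕ) :
    N + k ∈ btIndices (t + 3 ^ N * M) ↔ k ∈ btIndices M := by
  simp only [btIndices, Set.mem_ofPred_eq,
    btDigit_add_three_pow_mul fun _ => btDigit_eq_zero_of_le hN]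

theorem add_three_pow_mul_ne_zero (hN : ∀ n ∈ btIndices t, n < N) (hM : M ≠ 0) :
    t + 3 ^ N * M ≠ 0 :=
  ne_zero_of_mem_btIndices ((add_mem_btIndices_add_three_pow_mul hN _).2 (jmax_mem hM))

theorem jmax_add_three_pow_mul (hN : ∀ n ∈ btIndices t, n < N) (hM : M ≠ 0) :
    jmax (t + 3 ^ N * M) = N + jmax M := by
  refine IsGreatest.csSup_eq ⟨(add_mem_btIndices_add_three_pow_mul hN _).2 (jmax_mem hM),
    fun j hj => ?_⟩
  rcases lt_or_ge j N with hjN | hjN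
  · omega
  · obtain ⟨k, rfl⟩ := Nat.exists_eq_add_of_le hjN
    exact Nat.add_le_add_left (le_jmax ((add_mem_btIndices_add_three_pow_mul hN k).1 hj)) N

theorem leadingDigit_add_three_pow_mul (hN : ∀ n ∈ btIndices t, n < N) (hM : M ≠ 0) :
    leadingDigit (t + 3 ^ N * M) = leadingDigit M := by
  rw [leadingDigit, jmax_add_three_pow_mul hN hM,
    btDigit_add_three_pow_mul fun _ => btDigit_eq_zero_of_le hN]
  rfl

theorem nextIdx_add_three_pow_mul_of_lt (hN : ∀ n ∈ btIndices t, n < N) (ht : t ≠ 0) {i : ℕ}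
    (hi : i < jmax t) : nextIdx (t + 3 ^ N * M) i = nextIdx t i := by
  obtain ⟨⟨hv, hiv⟩, hmin⟩ := isLeast_nextIdx ht hi
  refine IsLeast.csInf_eq ⟨⟨(mem_btIndices_add_three_pow_mul_of_lt (hN _ hv)).2 hv, hiv⟩, ?_⟩
  rintro j ⟨hj, hij⟩
  rcases lt_or_ge j N with hjN | hjN
  · exact hmin ⟨(mem_btIndices_add_three_pow_mul_of_lt hjN).1 hj, hij⟩
  · exact (hN _ hv).le.trans hjN

theorem nextIdx_jmax_add_three_pow_mul (hN : ∀ n ∈ btIndices t, n < N) (ht : t ≠ 0)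
    (hM : M ≠ 0) : nextIdx (t + 3 ^ N * M) (jmax t) = N + sInf (btIndices M) := by
  refine IsLeast.csInf_eq ⟨⟨(add_mem_btIndices_add_three_pow_mul hN _).2
    (Nat.sInf_mem (btIndices_nonempty hM)), by have := hN _ (jmax_mem ht); omega⟩, ?_⟩
  rintro j ⟨hj, hij⟩
  rcases lt_or_ge j N with hjN | hjN
  · exact absurd (le_jmax ((mem_btIndices_add_three_pow_mul_of_lt hjN).1 hj)) hij.not_ge
  · obtain ⟨k, rfl⟩ := Nat.exists_eq_add_of_le hjN
    exact Nat.add_le_add_left (Nat.sInf_le ((add_mem_btIndices_add_three_pow_mul hN k).1 hj)) N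

theorem nextIdx_add_add_three_pow_mul (hN : ∀ n ∈ btIndices t, n < N) (hM : M ≠ 0) {k : ℕ}
    (hk : k < jmax M) : nextIdx (t + 3 ^ N * M) (N + k) = N + nextIdx M k := by
  obtain ⟨⟨hv, hkv⟩, hmin⟩ := isLeast_nextIdx hM hk
  refine IsLeast.csInf_eq ⟨⟨(add_mem_btIndices_add_three_pow_mul hN _).2 hv, by omega⟩, ?_⟩
  rintro j ⟨hj, hij⟩
  obtain ⟨j, rfl⟩ := Nat.exists_eq_add_of_le (show N ≤ j by omega)
  exact Nat.add_le_add_left (hmin ⟨(add_mem_btIndices_add_three_pow_mul hN j).1 hj, by omega⟩) N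

theorem mem_signChangeSet_add_three_pow_mul_of_lt (hN : ∀ n ∈ btIndices t, n < N) (ht : t ≠ 0)
    (hM : M ≠ 0) {i : ℕ} (hi : i < N) :
    i ∈ signChangeSet (t + 3 ^ N * M) ↔
      i ∈ signChangeSet t ∨ (i = jmax t ∧ leadingDigit t ≠ trailingDigit M) := by
  have hlt : i < jmax (t + 3 ^ N * M) := by rw [jmax_add_three_pow_mul hN hM]; omega
  simp only [signChangeSet, Set.mem_ofPred_eq, mem_btIndices_add_three_pow_mul_of_lt hi,
    btDigit_add_three_pow_mul_of_lt hi, hlt, true_and]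
  by_cases hiI : i ∈ btIndices t
  · rcases (le_jmax hiI).lt_or_eq with hij | rfl
    · have hv := hN _ (isLeast_nextIdx ht hij).1.1
      rw [nextIdx_add_three_pow_mul_of_lt hN ht hij, btDigit_add_three_pow_mul_of_lt hv]
      simp [hiI, hij, hij.ne]
    · rw [nextIdx_jmax_add_three_pow_mul hN ht hM,
        btDigit_add_three_pow_mul fun _ => btDigit_eq_zero_of_le hN]
      simp [hiI, leadingDigit, trailingDigit]
  · simp only [hiI, false_and, false_or, false_iff, not_and]
    exact fun h => absurd (h ▸ jmax_mem ht) hiI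

theorem add_mem_signChangeSet_add_three_pow_mul (hN : ∀ n ∈ btIndices t, n < N) (hM : M ≠ 0)
    (k : ℕ) : N + k ∈ signChangeSet (t + 3 ^ N * M) ↔ k ∈ signChangeSet M := by
  have hdigit := btDigit_add_three_pow_mul (M := M) fun _ => btDigit_eq_zero_of_le hN
  simp only [signChangeSet, Set.mem_ofPred_eq, add_mem_btIndices_add_three_pow_mul hN,
    jmax_add_three_pow_mul hN hM, Nat.add_lt_add_iff_left, hdigit]
  refine and_congr_right fun _ => and_congr_right fun hk => ?_
  rw [nextIdx_add_add_three_pow_mul hN hM hk, hdigit]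

theorem signChangeSet_add_three_pow_mul (hN : ∀ n ∈ btIndices t, n < N) (ht : t ≠ 0)
    (hM : M ≠ 0) :
    signChangeSet (t + 3 ^ N * M) =
      {i | i ∈ signChangeSet t ∨ (i = jmax t ∧ leadingDigit t ≠ trailingDigit M)} ∪
        (N + ·) '' signChangeSet M := by
  ext i
  rcases lt_or_ge i N with hi | hi
  · rw [mem_signChangeSet_add_three_pow_mul_of_lt hN ht hM hi, Set.mem_union]
    refine (or_iff_left ?_).symm
    rintro ⟨k, -, hk⟩
    simp only at hk
    omega
  · obtain ⟨k, rfl⟩ := Nat.exists_eq_add_of_le hi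
    rw [add_mem_signChangeSet_add_three_pow_mul hN hM, Set.mem_union,
      (add_right_injective N).mem_set_image]
    refine (or_iff_right ?_).symm
    rintro (hk | ⟨hk, -⟩)
    · have := hN _ hk.1; omega
    · have := hN _ (jmax_mem ht); omega

theorem signChanges_add_three_pow_mul (hN : ∀ n ∈ btIndices t, n < N) (ht : t ≠ 0)
    (hM : M ≠ 0) :
    signChanges (t + 3 ^ N * M) =
      signChanges t + signChanges M + if leadingDigit t = trailingDigit M then 0 else 1 := by
  set low := {i | i ∈ signChangeSet t ∨ (i = jmax t ∧ leadingDigit t ≠ trailingDigit M)}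
  have hlow : ∀ i ∈ low, i < N := by
    rintro i (hi | ⟨rfl, -⟩)
    exacts [hN _ hi.1, hN _ (jmax_mem ht)]
  have hdisj : Disjoint low ((N + ·) '' signChangeSet M) :=
    Set.disjoint_left.2 fun i hi ⟨k, _, hk⟩ => by simp only at hk; have := hlow i hi; omega
  have hfin : ∀ s, (signChangeSet s).Finite := fun s =>
    (btIndices_finite s).subset (signChangeSet_subset_btIndices s)
  rw [signChanges_eq_ncard, signChangeSet_add_three_pow_mul hN ht hM,
    Set.ncard_union_eq hdisj ((Set.finite_Iio N).subset hlow) ((hfin M).image _),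
    Set.ncard_image_of_injective _ (add_right_injective N), ← signChanges_eq_ncard]
  split_ifs with h
  · simp [low, h, signChanges_eq_ncard]
  · have : low = insert (jmax t) (signChangeSet t) := by
      ext i
      simp [low, h, or_comm]
    rw [this, Set.ncard_insert_of_notMem (fun hj => lt_irrefl _ hj.2.1) (hfin t),
      ← signChanges_eq_ncard]
    ring

end Concatenation

theorem exists_forall_of_antitone {ι T : Type*} [Preorder ι] [IsDirectedOrder ι] [Nonempty ι]
    [Finite T] {P : ι → T → Prop} (hP : ∀ τ, Antitone (P · τ)) (h : ∀ i, ∃ τ, P i τ) :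
    ∃ τ, ∀ i, P i τ := by
  by_contra! hne
  choose f hf using hne
  obtain ⟨i, hi⟩ := Finite.bddAbove_range f
  obtain ⟨τ, hτ⟩ := h i
  exact hf τ (hP τ (hi ⟨τ, rfl⟩) hτ)

theorem Set.Infinite.exists_ne_dvd_sub {B : Set ℤ} (hB : B.Infinite) (n : ℕ) [NeZero n] :
    ∃ x ∈ B, ∃ y ∈ B, x ≠ y ∧ (n : ℤ) ∣ x - y := by
  obtain ⟨x, hx, y, hy, hxy, h⟩ :=
    hB.exists_ne_map_eq_of_mapsTo (Set.mapsTo_univ (fun x : ℤ => (x : ZMod n)) B) Set.finite_univ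
  exact ⟨x, hx, y, hy, hxy, ((ZMod.intCast_eq_intCast_iff x y n).1 h).symm.dvd⟩

def IsBlock {K : ℕ} (τ : ZMod K × ℤˣ × ℤˣ) (m : ℤ) : Prop :=
  m ≠ 0 ∧ (signChanges m : ZMod K) = τ.1 ∧ trailingDigit m = τ.2.1 ∧ leadingDigit m = τ.2.2

def SuppliesBlock (B : Set ℤ) {K : ℕ} (τ : ZMod K × ℤˣ × ℤˣ) (E : Finset ℤ) (L₀ : ℕ) : Prop :=
  ∃ x ∈ B, ∃ y ∈ B, x ∉ E ∧ y ∉ E ∧ ∃ L, L₀ ≤ L ∧ ∃ m, IsBlock τ m ∧ x - y = 3 ^ L * m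

theorem exists_forall_suppliesBlock {B : Set ℤ} (hB : B.Infinite) (K : ℕ) [NeZero K] :
    ∃ τ : ZMod K × ℤˣ × ℤˣ, ∀ E L₀, SuppliesBlock B τ E L₀ := by
  have hanti : ∀ τ : ZMod K × ℤˣ × ℤˣ,
      Antitone fun p : Finset ℤ × ℕ => SuppliesBlock B τ p.1 p.2 := by
    rintro τ ⟨E, L₀⟩ ⟨E', L₀'⟩ ⟨hE, hL⟩ ⟨x, hx, y, hy, hxE, hyE, L, hL', h⟩
    exact ⟨x, hx, y, hy, fun h => hxE (hE h), fun h => hyE (hE h), L, hL.trans hL', h⟩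
  have hex : ∀ p : Finset ℤ × ℕ, ∃ τ : ZMod K × ℤˣ × ℤˣ, SuppliesBlock B τ p.1 p.2 := by
    rintro ⟨E, L₀⟩
    obtain ⟨x, hx, y, hy, hxy, m, hm⟩ := (hB.sdiff E.finite_toSet).exists_ne_dvd_sub (3 ^ L₀)
    push_cast at hm
    have hm0 : m ≠ 0 := by
      rintro rfl
      exact hxy (sub_eq_zero.1 (by simpa using hm))
    obtain ⟨a, ha⟩ := isUnit_trailingDigit hm0
    obtain ⟨b, hb⟩ := isUnit_leadingDigit hm0
    exact ⟨(signChanges m, a, b), x, hx.1, y, hy.1, hx.2, hy.2, L₀, le_rfl, m,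
      ⟨hm0, rfl, ha.symm, hb.symm⟩, hm⟩
  obtain ⟨τ, hτ⟩ := exists_forall_of_antitone hanti hex
  exact ⟨τ, fun E L₀ => hτ (E, L₀)⟩

theorem zero_mem_SIP (B : Set ℤ) : (0 : ℤ) ∈ SIP B :=
  ⟨0, ⟨∅, by simp, by simp⟩, 0, ⟨∅, by simp, by simp⟩, by simp⟩

theorem sum_sub_sum_add_sub_mem_SIP {B : Set ℤ} {F G : Finset ℤ} {x y : ℤ} (hF : ↑F ⊆ B)
    (hG : ↑G ⊆ B) (hx : x ∈ B) (hy : y ∈ B) (hxF : x ∉ F) (hyG : y ∉ G) :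
    ∑ v ∈ F, v - ∑ v ∈ G, v + (x - y) ∈ SIP B := by
  refine ⟨_, ⟨insert x F, ?_, rfl⟩, _, ⟨insert y G, ?_, rfl⟩, ?_⟩
  · rw [Finset.coe_insert]; exact Set.insert_subset hx hF
  · rw [Finset.coe_insert]; exact Set.insert_subset hy hG
  · rw [Finset.sum_insert hxF, Finset.sum_insert hyG]; ring

section Blocks

variable {B : Set ℤ} {K : ℕ} {τ : ZMod K × ℤˣ × ℤˣ} {u t : ℤ}

theorem exists_add_block_sub_mem_SIP (hr : t - u ∈ SIP B)
    (hτ : ∀ E L₀, SuppliesBlock B τ E L₀) (L₀ : ℕ) (ε : ℤˣ) :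
    ∃ L, L₀ ≤ L ∧ ∃ m, IsBlock τ m ∧ t + 3 ^ L * (ε * m) - u ∈ SIP B := by
  obtain ⟨_, ⟨F, hF, rfl⟩, _, ⟨G, hG, rfl⟩, hs⟩ := hr
  obtain ⟨x, hx, y, hy, hxE, hyE, L, hL, m, hm, hxy⟩ := hτ (F ∪ G) L₀
  simp only [Finset.mem_union, not_or] at hxE hyE
  refine ⟨L, hL, m, hm, ?_⟩
  rcases Int.units_eq_one_or ε with rfl | rfl
  · convert sum_sub_sum_add_sub_mem_SIP hF hG hx hy hxE.1 hyE.2 using 1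
    push_cast
    linear_combination hs - hxy
  · convert sum_sub_sum_add_sub_mem_SIP hF hG hy hx hyE.1 hxE.2 using 1
    push_cast
    linear_combination hs + hxy

theorem exists_append_block (hr : t - u ∈ SIP B) (hτ : ∀ E L₀, SuppliesBlock B τ E L₀)
    (ht : t ≠ 0) (σ : ℤˣ) :
    ∃ t', t' ≠ 0 ∧ t' - u ∈ SIP B ∧
      (signChanges t' : ZMod K) = signChanges t + τ.1 + (if σ = 1 then 0 else 1) ∧
      leadingDigit t' = ↑(τ.2.1 * τ.2.2 * σ) * leadingDigit t := by
  obtain ⟨ℓ, hℓ⟩ := isUnit_leadingDigit ht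
  obtain ⟨N, hN⟩ := exists_forall_mem_btIndices_lt t
  obtain ⟨L, hNL, m, ⟨hm, hz, ha, hb⟩, hr'⟩ := exists_add_block_sub_mem_SIP hr hτ N (σ * τ.2.1 * ℓ)
  have hL : ∀ n ∈ btIndices t, n < L := fun n hn => (hN n hn).trans_le hNL
  have hεm : ((σ * τ.2.1 * ℓ : ℤˣ) : ℤ) * m ≠ 0 := mul_ne_zero (Units.ne_zero _) hm
  refine ⟨_, add_three_pow_mul_ne_zero hL hεm, hr', ?_, ?_⟩
  · have hchange : leadingDigit t = trailingDigit (↑(σ * τ.2.1 * ℓ) * m) ↔ σ = 1 := by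
      rw [trailingDigit_units_mul, ha, ← hℓ, ← Units.val_mul, Units.val_inj,
        mul_right_comm (σ * τ.2.1), mul_assoc σ, Int.units_mul_self, mul_one, eq_comm,
        mul_eq_right]
    rw [signChanges_add_three_pow_mul hL ht hεm, signChanges_units_mul]
    simp only [hchange]
    push_cast
    rw [hz]
  · rw [leadingDigit_add_three_pow_mul hL hεm, leadingDigit_units_mul, hb, ← hℓ]
    push_cast
    ring

theorem exists_append_blocks (hr : t - u ∈ SIP B) (hτ : ∀ E L₀, SuppliesBlock B τ E L₀)
    (ht : t ≠ 0) {n d : ℕ} (hd : d ≤ n) :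
    ∃ t', t' ≠ 0 ∧ t' - u ∈ SIP B ∧
      (signChanges t' : ZMod K) = signChanges t + n * τ.1 + d ∧
      leadingDigit t' = ↑((τ.2.1 * τ.2.2) ^ n * (-1) ^ d) * leadingDigit t := by
  induction n generalizing d with
  | zero =>
    obtain rfl : d = 0 := by omega
    exact ⟨t, ht, hr, by simp, by simp⟩
  | succ n ih =>
    rcases hd.lt_or_eq with hd | rfl
    · obtain ⟨t₁, ht₁, hr₁, hz₁, hl₁⟩ := ih (Nat.lt_succ_iff.1 hd)
      obtain ⟨t₂, ht₂, hr₂, hz₂, hl₂⟩ := exists_append_block hr₁ hτ ht₁ 1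
      refine ⟨t₂, ht₂, hr₂, ?_, ?_⟩
      · rw [hz₂, hz₁, if_pos rfl]; push_cast; ring
      · rw [hl₂, hl₁]; push_cast; ring
    · obtain ⟨t₁, ht₁, hr₁, hz₁, hl₁⟩ := ih le_rfl
      obtain ⟨t₂, ht₂, hr₂, hz₂, hl₂⟩ := exists_append_block hr₁ hτ ht₁ (-1)
      refine ⟨t₂, ht₂, hr₂, ?_, ?_⟩
      · rw [hz₂, hz₁, if_neg (by decide)]; push_cast; ring
      · rw [hl₂, hl₁]; push_cast; ring

end Blocks

theorem exists_ne_zero_sub_mem_SIP {B : Set ℤ} {K : ℕ} {τ : ZMod K × ℤˣ × ℤˣ}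
    (hτ : ∀ E L₀, SuppliesBlock B τ E L₀) (u : ℤ) :
    ∃ t, t ≠ 0 ∧ t - u ∈ SIP B := by
  by_cases hu : u = 0
  · obtain ⟨L, -, m, hm, hr⟩ :=
      exists_add_block_sub_mem_SIP (t := u) (u := u) (by simpa using zero_mem_SIP B) hτ 0 1
    exact ⟨_, by simp [hu, hm.1], hr⟩
  · exact ⟨u, hu, by simpa using zero_mem_SIP B⟩

theorem exists_lt_two_mul_natCast_eq_and_neg_one_pow_eq {K : ℕ} (hK : Odd K) (c : ZMod K)
    (s : ℤˣ) : ∃ d < 2 * K, (d : ZMod K) = c ∧ (-1) ^ d = s := by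
  have : NeZero K := ⟨hK.pos.ne'⟩
  have hc := c.val_lt
  by_cases h : (-1 : ℤˣ) ^ c.val = s
  · exact ⟨c.val, by omega, by simp, h⟩
  · refine ⟨c.val + K, by omega, by simp, ?_⟩
    rw [pow_add, hK.neg_one_pow, mul_neg_one, Int.units_ne_iff_eq_neg.1 h, neg_neg]

theorem signChanges_surjective_mod_general (A : Set ℤ)
    (htr : ∃ (B : Set ℤ) (u : ℤ), B ⊆ {n : ℤ | 0 < n} ∧ B.Infinite ∧
      posPart ((fun t => u + t) '' SIP B) ⊆ A)
    (K : ℕ) (hKodd : Odd K) :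
    ∀ c : ZMod K, ∃ t ∈ A, ((signChanges t : ℤ) : ZMod K) = c := by
  obtain ⟨B, u, -, hB, hBA⟩ := htr
  have : NeZero K := ⟨hKodd.pos.ne'⟩
  intro c
  obtain ⟨τ, hτ⟩ := exists_forall_suppliesBlock hB K
  obtain ⟨t₀, ht₀, hr₀⟩ := exists_ne_zero_sub_mem_SIP hτ u
  obtain ⟨s, hs⟩ := isUnit_leadingDigit ht₀
  obtain ⟨d, hd, hdc, hds⟩ :=
    exists_lt_two_mul_natCast_eq_and_neg_one_pow_eq hKodd (c - signChanges t₀) s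
  obtain ⟨t, -, hr, hz, hlead⟩ := exists_append_blocks hr₀ hτ ht₀ hd.le
  have hpos : 0 < t := by
    refine pos_of_leadingDigit_eq_one ?_
    rw [hlead, hds, ← hs, pow_mul, Int.units_sq, one_pow, one_mul, ← Units.val_mul,
      Int.units_mul_self, Units.val_one]
  refine ⟨t, hBA ⟨⟨t - u, hr, by ring⟩, hpos⟩, ?_⟩
  rw [Int.cast_natCast, hz, hdc]
  push_cast
  rw [ZMod.natCast_self]
  ring

/-- if `A ⊆ ℕ` is a translate of an SIP set, then for every odd
positive `K` the map `t ↦ z(t) mod K` is surjective from `A` onto `ℤ/Kℤ`. -/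
theorem signChanges_surjective_mod (A : Set ℤ) (hA : A ⊆ {n : ℤ | 0 < n})
    (htr : ∃ (B : Set ℤ) (u : ℤ), B ⊆ {n : ℤ | 0 < n} ∧ B.Infinite ∧
      posPart ((fun t => u + t) '' SIP B) ⊆ A)
    (K : ℕ) (hKpos : 0 < K) (hKodd : Odd K) :
    ∀ c : ZMod K, ∃ t ∈ A, ((signChanges t : ℤ) : ZMod K) = c :=
  signChanges_surjective_mod_general A htr K hKodd
end
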